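/- arXiv:2308.07829 — 6 statements merged into one kernel-verified Lean document; each statement's English description precedes it below -/
import Mathlib

section
/- Let λ : ℕ → ℝ satisfy λ_{p+1} ≥ λ_p + 1 for all p ≥ 0, with γ_p := λ_p − λ_{p−1} − 1 ≥ 0 and ∑_{p≥1} γ_p = −λ_0 < ∞. Then for every n ≥ 1, ∑_{p≥1, p≠n} γ_p/|λ_p − λ_n| ≤ (2/n)·(−λ_0) + ∑_{p ≥ n/2} γ_p. -/
/-!
The gap condition makes `p ↦ λ_p − p` monotone, so `|λ_p − λ_n| ≥ |p − n|`. For `p ≠ n` with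
`2p ≥ n` this gives `|λ_p − λ_n| ≥ 1`, so the term is at most `γ_p`; for `2p < n` it gives
`|λ_p − λ_n| ≥ n − p > n/2`, so the term is at most `(2/n) γ_p`. Summing the termwise bound
and using `∑ γ_p = −λ_0` gives the estimate.
-/

/-- `γ_p = λ_p − λ_{p−1} − 1`, set to `0` at `p = 0` (where the formula would give `−1`). -/
def gapExcess (lam : ℕ → ℝ) (p : ℕ) : ℝ := if 1 ≤ p then lam p - lam (p - 1) - 1 else 0

/-- The terms excluded from the sum vanish anyway: `γ_0 = 0`, and `x / 0 = 0`. -/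
lemma ite_and_eq_gapExcess_div (lam : ℕ → ℝ) (n p : ℕ) :
    (if 1 ≤ p ∧ p ≠ n then (lam p - lam (p - 1) - 1) / |lam p - lam n| else 0) =
      gapExcess lam p / |lam p - lam n| := by
  by_cases hp : 1 ≤ p
  · obtain rfl | hpn := eq_or_ne p n <;> simp [gapExcess, *]
  · simp [gapExcess, hp]

lemma one_le_abs_natCast_sub {p n : ℕ} (h : p ≠ n) : (1 : ℝ) ≤ |(p : ℝ) - n| := by
  have : (1 : ℤ) ≤ |(p : ℤ) - n| := Int.one_le_abs (sub_ne_zero.2 (by exact_mod_cast h))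
  exact_mod_cast this

section GapCondition

variable {lam : ℕ → ℝ}

lemma monotone_sub_natCast (hgap : ∀ p : ℕ, lam p + 1 ≤ lam (p + 1)) :
    Monotone fun p : ℕ => lam p - p :=
  monotone_nat_of_le_succ fun p => by push_cast; linarith [hgap p]

lemma abs_natCast_sub_le_abs_sub (hgap : ∀ p : ℕ, lam p + 1 ≤ lam (p + 1)) (p n : ℕ) :
    |(p : ℝ) - n| ≤ |lam p - lam n| := by
  have hmono := monotone_sub_natCast hgap
  rcases le_total p n with h | h
  · have hle : lam p - p ≤ lam n - n := hmono h
    have hpn : (p : ℝ) ≤ n := by exact_mod_cast h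
    rw [abs_of_nonpos (by linarith), abs_of_nonpos (by linarith)]
    linarith
  · have hle : lam n - n ≤ lam p - p := hmono h
    have hnp : (n : ℝ) ≤ p := by exact_mod_cast h
    rw [abs_of_nonneg (by linarith), abs_of_nonneg (by linarith)]
    linarith

lemma gapExcess_nonneg (hgap : ∀ p : ℕ, lam p + 1 ≤ lam (p + 1)) (p : ℕ) :
    0 ≤ gapExcess lam p := by
  unfold gapExcess
  split_ifs with hp
  · obtain ⟨q, rfl⟩ := Nat.exists_eq_add_of_le' hp
    simp only [Nat.add_sub_cancel]
    linarith [hgap q]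
  · exact le_rfl

lemma hasSum_gapExcess (hsum : HasSum (fun p : ℕ => lam (p + 1) - lam p - 1) (-(lam 0))) :
    HasSum (gapExcess lam) (-(lam 0)) := by
  have hsucc : (fun p : ℕ => gapExcess lam (p + 1)) = fun p => lam (p + 1) - lam p - 1 := by
    funext p
    simp [gapExcess]
  have h := (hasSum_nat_add_iff (f := gapExcess lam) 1).1 (hsucc ▸ hsum)
  simpa [gapExcess] using h

lemma gapExcess_div_abs_sub_le (hgap : ∀ p : ℕ, lam p + 1 ≤ lam (p + 1)) {n : ℕ} (p : ℕ) :
    gapExcess lam p / |lam p - lam n| ≤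
      2 / (n : ℝ) * gapExcess lam p + if n ≤ 2 * p then gapExcess lam p else 0 := by
  have hγ := gapExcess_nonneg hgap p
  have hdist := abs_natCast_sub_le_abs_sub hgap p n
  obtain rfl | hpn := eq_or_ne p n
  · have : 0 ≤ 2 / (p : ℝ) * gapExcess lam p := by positivity
    split_ifs <;> simp <;> linarith
  split_ifs with hcase
  · have hone : (1 : ℝ) ≤ |lam p - lam n| := (one_le_abs_natCast_sub hpn).trans hdist
    have : 0 ≤ 2 / (n : ℝ) * gapExcess lam p := by positivity
    have : gapExcess lam p / |lam p - lam n| ≤ gapExcess lam p := div_le_self hγ hone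
    linarith
  · have hlt : (2 * p : ℝ) < n := by exact_mod_cast Nat.lt_of_not_le hcase
    have hhalf : (n : ℝ) / 2 ≤ |lam p - lam n| := by
      refine le_trans ?_ hdist
      rw [abs_of_neg (by linarith)]
      linarith
    calc gapExcess lam p / |lam p - lam n| ≤ gapExcess lam p / (n / 2) :=
          div_le_div_of_nonneg_left hγ (by linarith [p.cast_nonneg (α := ℝ)]) hhalf
      _ = 2 / (n : ℝ) * gapExcess lam p + 0 := by ring

end GapCondition

/-- Under the gap condition and the trace formula, for every `n ≥ 1` one has
`∑_{p≥1, p≠n} γ_p/|λ_p − λ_n| ≤ (2/n)·(−λ_0) + ∑_{p ≥ n/2} γ_p`. -/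
theorem stmt_5 (lam : ℕ → ℝ) (hgap : ∀ p : ℕ, lam p + 1 ≤ lam (p + 1))
    (hsum : HasSum (fun p : ℕ => lam (p + 1) - lam p - 1) (-(lam 0))) :
    ∀ n : ℕ, 1 ≤ n →
      (∑' p : ℕ, if 1 ≤ p ∧ p ≠ n then (lam p - lam (p - 1) - 1) / |lam p - lam n| else 0)
        ≤ (2 / (n : ℝ)) * (-(lam 0)) +
            ∑' p : ℕ, if n ≤ 2 * p then lam p - lam (p - 1) - 1 else 0 := by
  intro n hn
  have hγ := hasSum_gapExcess hsum
  have htail : (fun p : ℕ => if n ≤ 2 * p then lam p - lam (p - 1) - 1 else 0) =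
      fun p => if n ≤ 2 * p then gapExcess lam p else 0 := by
    funext p
    split_ifs with h
    · simp [gapExcess, show 1 ≤ p by omega]
    · rfl
  have htail_summable : Summable fun p : ℕ => if n ≤ 2 * p then gapExcess lam p else 0 :=
    hγ.summable.of_nonneg_of_le (fun p => by split_ifs <;> simp [gapExcess_nonneg hgap p])
      (fun p => by split_ifs <;> simp [gapExcess_nonneg hgap p])
  have hbound := (hγ.mul_left (2 / (n : ℝ))).add htail_summable.hasSum
  rw [htail, ← hbound.tsum_eq]
  simp only [ite_and_eq_gapExcess_div]
  have hterm := gapExcess_div_abs_sub_le hgap (n := n)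
  exact Summable.tsum_le_tsum hterm (hbound.summable.of_nonneg_of_le
    (fun p => div_nonneg (gapExcess_nonneg hgap p) (abs_nonneg _)) hterm) hbound.summable
end

section
/- Let (f_n)_{n≥0} be an orthonormal basis of a Hilbert space H = L²_+ and let (λ_n)_{n≥0} be real numbers with n + λ₀ ≤ λ_n ≤ n and λ₀ ≤ 0. Fix λ• < λ₀. Suppose there are constants 0 < c < C such that for every f in a dense subspace V, c‖f‖²_{1/2} ≤ ∑_{n≥0}(λ_n − λ•)|⟨f,f_n⟩|² ≤ C(1+|λ•|)‖f‖²_{1/2}, where ‖f‖²_{1/2} := ∑_{n≥0}(n+1)|f̂(n)|² for some fixed orthonormal basis (e_n). Then there exists 0 < κ₁ < 1 with κ₁² ∑_{n≥0}(n+1)|f̂(n)|² ≤ ∑_{n≥0}(n+1)|⟨f,f_n⟩|² ≤ κ₁^{-2} ∑_{n≥0}(n+1)|f̂(n)|² for all f ∈ V. -/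
/-! The weights `λ_n - λ•` are comparable with `n + 1`: from `n + λ₀ ≤ λ_n ≤ n` one gets
`min (λ₀ - λ•) 1 · (n + 1) ≤ λ_n - λ• ≤ (1 + |λ•|) · (n + 1)`, and `λ₀ - λ• > 0`. Hence the
`λ`-weighted norm is equivalent to `∑ (n + 1) |⟨f, f_n⟩|²`, and composing with the assumed
equivalence between the `λ`-weighted norm and the `H^{1/2}` norm gives the result. -/

section WeightedSums

variable {ι : Type*} {a b : ι → ℝ} {m M : ℝ}

theorem summable_iff_of_mul_le_of_le_mul (hm : 0 < m) (ha : ∀ i, 0 ≤ a i)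
    (hlow : ∀ i, m * a i ≤ b i) (hhigh : ∀ i, b i ≤ M * a i) : Summable b ↔ Summable a :=
  ⟨fun hb => Summable.of_nonneg_of_le ha (fun i => (le_inv_mul_iff₀ hm).2 (hlow i))
      (hb.mul_left m⁻¹),
    fun hs => Summable.of_nonneg_of_le (fun i => (mul_nonneg hm.le (ha i)).trans (hlow i)) hhigh
      (hs.mul_left M)⟩

/-- No summability hypothesis is needed: `a` and `b` are summable together, and otherwise both
sums are the junk value `0`. -/
theorem mul_tsum_le_tsum_le_mul_tsum (hm : 0 < m) (ha : ∀ i, 0 ≤ a i)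
    (hlow : ∀ i, m * a i ≤ b i) (hhigh : ∀ i, b i ≤ M * a i) :
    m * ∑' i, a i ≤ ∑' i, b i ∧ ∑' i, b i ≤ M * ∑' i, a i := by
  have hab := summable_iff_of_mul_le_of_le_mul hm ha hlow hhigh
  by_cases hsa : Summable a
  · rw [← tsum_mul_left, ← tsum_mul_left]
    exact ⟨Summable.tsum_le_tsum hlow (hsa.mul_left m) (hab.2 hsa),
      Summable.tsum_le_tsum hhigh (hab.2 hsa) (hsa.mul_left M)⟩
  · simp [tsum_eq_zero_of_not_summable hsa, tsum_eq_zero_of_not_summable (mt hab.1 hsa)]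

end WeightedSums

theorem min_mul_succ_le_sub_le_mul_succ {lam : ℕ → ℝ} (lamb : ℝ)
    (hlam : ∀ n : ℕ, (n : ℝ) + lam 0 ≤ lam n ∧ lam n ≤ n) (n : ℕ) :
    min (lam 0 - lamb) 1 * ((n : ℝ) + 1) ≤ lam n - lamb ∧
      lam n - lamb ≤ (1 + |lamb|) * ((n : ℝ) + 1) := by
  have hn : (0 : ℝ) ≤ n := n.cast_nonneg
  have hmin₁ := min_le_left (lam 0 - lamb) 1
  have hmin₂ := min_le_right (lam 0 - lamb) 1
  constructor
  · nlinarith [(hlam n).1]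
  · nlinarith [(hlam n).2, neg_le_abs lamb, abs_nonneg lamb]

theorem exists_sq_mul_le_and_le_inv_sq_mul {c C m M : ℝ} (hc : 0 < c) (hC : 0 < C)
    (hm : 0 < m) (hM : 0 < M) :
    ∃ κ : ℝ, 0 < κ ∧ κ < 1 ∧ ∀ E T S : ℝ, 0 ≤ E → c * E ≤ S → S ≤ C * E →
      m * T ≤ S → S ≤ M * T → κ ^ 2 * E ≤ T ∧ T ≤ κ⁻¹ ^ 2 * E := by
  set κ := min (1 / 2) (min (c / M) (m / C))
  have hκ : 0 < κ := lt_min (by norm_num) (lt_min (by positivity) (by positivity))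
  have hκ_half : κ ≤ 1 / 2 := min_le_left _ _
  have hκ_sq : κ ^ 2 ≤ κ := by nlinarith
  have hκc : κ ^ 2 * M ≤ c :=
    (le_div_iff₀ hM).1 (hκ_sq.trans ((min_le_right _ _).trans (min_le_left _ _)))
  have hκm : κ ^ 2 * C ≤ m :=
    (le_div_iff₀ hC).1 (hκ_sq.trans ((min_le_right _ _).trans (min_le_right _ _)))
  refine ⟨κ, hκ, by linarith, fun E T S hE hcS hSC hmS hSM => ⟨?_, ?_⟩⟩
  · have : M * (κ ^ 2 * E) ≤ M * T := by nlinarith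
    exact le_of_mul_le_mul_left this hM
  · have : κ ^ 2 * T ≤ E := by nlinarith
    rwa [inv_pow, ← div_eq_inv_mul, le_div_iff₀ (by positivity), mul_comm]

theorem stmt_10_general {H : Type*} [NormedAddCommGroup H] [InnerProductSpace ℂ H]
    (e f : ℕ → H)
    (lam : ℕ → ℝ) (lamb : ℝ)
    (hlam : ∀ n : ℕ, (n : ℝ) + lam 0 ≤ lam n ∧ lam n ≤ (n : ℝ))
    (hlamb : lamb < lam 0)
    (V : Set H) (c C : ℝ) (hc : 0 < c) (hcC : c < C)
    (hequiv : ∀ v ∈ V,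
      c * ∑' n : ℕ, ((n : ℝ) + 1) * ‖(inner ℂ v (e n) : ℂ)‖ ^ 2
          ≤ ∑' n : ℕ, (lam n - lamb) * ‖(inner ℂ v (f n) : ℂ)‖ ^ 2 ∧
      ∑' n : ℕ, (lam n - lamb) * ‖(inner ℂ v (f n) : ℂ)‖ ^ 2
          ≤ C * (1 + |lamb|) * ∑' n : ℕ, ((n : ℝ) + 1) * ‖(inner ℂ v (e n) : ℂ)‖ ^ 2) :
    ∃ κ : ℝ, 0 < κ ∧ κ < 1 ∧ ∀ v ∈ V,
      κ ^ 2 * ∑' n : ℕ, ((n : ℝ) + 1) * ‖(inner ℂ v (e n) : ℂ)‖ ^ 2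
          ≤ ∑' n : ℕ, ((n : ℝ) + 1) * ‖(inner ℂ v (f n) : ℂ)‖ ^ 2 ∧
      ∑' n : ℕ, ((n : ℝ) + 1) * ‖(inner ℂ v (f n) : ℂ)‖ ^ 2
          ≤ κ⁻¹ ^ 2 * ∑' n : ℕ, ((n : ℝ) + 1) * ‖(inner ℂ v (e n) : ℂ)‖ ^ 2 := by
  have hm : 0 < min (lam 0 - lamb) 1 := lt_min (sub_pos.2 hlamb) one_pos
  have hM : 0 < 1 + |lamb| := by positivity
  obtain ⟨κ, hκ, hκ1, hκ_bound⟩ :=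
    exists_sq_mul_le_and_le_inv_sq_mul hc (mul_pos (hc.trans hcC) hM) hm hM
  refine ⟨κ, hκ, hκ1, fun v hv => ?_⟩
  have hweights := mul_tsum_le_tsum_le_mul_tsum hm
    (a := fun n : ℕ => ((n : ℝ) + 1) * ‖(inner ℂ v (f n) : ℂ)‖ ^ 2)
    (b := fun n : ℕ => (lam n - lamb) * ‖(inner ℂ v (f n) : ℂ)‖ ^ 2)
    (fun n => by positivity)
    (fun n => by
      rw [← mul_assoc]; gcongr; exact (min_mul_succ_le_sub_le_mul_succ lamb hlam n).1)
    (fun n => by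
      rw [← mul_assoc]; gcongr; exact (min_mul_succ_le_sub_le_mul_succ lamb hlam n).2)
  exact hκ_bound _ _ _ (tsum_nonneg fun n => by positivity)
    (hequiv v hv).1 (hequiv v hv).2 hweights.1 hweights.2

/-- Two-sided equivalence between the `H^{1/2}` norm (with respect to the standard
orthonormal basis `e`) and the norm given by the eigenfunction expansion `f`. -/
theorem stmt_10 {H : Type*} [NormedAddCommGroup H] [InnerProductSpace ℂ H] [CompleteSpace H]
    (e f : ℕ → H) (he : Orthonormal ℂ e) (hf : Orthonormal ℂ f)
    (lam : ℕ → ℝ) (lamb : ℝ) (hlam0 : lam 0 ≤ 0)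
    (hlam : ∀ n : ℕ, (n : ℝ) + lam 0 ≤ lam n ∧ lam n ≤ (n : ℝ))
    (hlamb : lamb < lam 0)
    (V : Set H) (hV : Dense V) (c C : ℝ) (hc : 0 < c) (hcC : c < C)
    (hequiv : ∀ v ∈ V,
      c * ∑' n : ℕ, ((n : ℝ) + 1) * ‖(inner ℂ v (e n) : ℂ)‖ ^ 2
          ≤ ∑' n : ℕ, (lam n - lamb) * ‖(inner ℂ v (f n) : ℂ)‖ ^ 2 ∧
      ∑' n : ℕ, (lam n - lamb) * ‖(inner ℂ v (f n) : ℂ)‖ ^ 2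
          ≤ C * (1 + |lamb|) * ∑' n : ℕ, ((n : ℝ) + 1) * ‖(inner ℂ v (e n) : ℂ)‖ ^ 2) :
    ∃ κ : ℝ, 0 < κ ∧ κ < 1 ∧ ∀ v ∈ V,
      κ ^ 2 * ∑' n : ℕ, ((n : ℝ) + 1) * ‖(inner ℂ v (e n) : ℂ)‖ ^ 2
          ≤ ∑' n : ℕ, ((n : ℝ) + 1) * ‖(inner ℂ v (f n) : ℂ)‖ ^ 2 ∧
      ∑' n : ℕ, ((n : ℝ) + 1) * ‖(inner ℂ v (f n) : ℂ)‖ ^ 2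
          ≤ κ⁻¹ ^ 2 * ∑' n : ℕ, ((n : ℝ) + 1) * ‖(inner ℂ v (e n) : ℂ)‖ ^ 2 :=
  stmt_10_general e f lam lamb hlam hlamb V c C hc hcC hequiv
end

section
/- For any u, v ∈ H^{1/2}(𝕋,ℂ), the pointwise product uv belongs to H^{1/2,1/√log}(𝕋,ℂ), i.e. ∑_{n∈ℤ} (max(1,|n|)/log(max(1,|n|)+1)) |ûv(n)|² < ∞, and there is a constant C > 0 with ‖uv‖_{1/2,1/√log} ≤ C ‖u‖_{1/2} ‖v‖_{1/2}. -/
/-- The weight `⟨n⟩ = max(1,|n|)` as a real number. -/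
noncomputable def wt (n : ℤ) : ℝ := ((max 1 |n| : ℤ) : ℝ)

/-- The convolution of two Fourier coefficient sequences (the Fourier coefficients of the
pointwise product). -/
noncomputable def conv (u v : ℤ → ℂ) (n : ℤ) : ℂ := ∑' k : ℤ, u k * v (n - k)

/-!
By Cauchy–Schwarz with the weights `⟨k⟩⟨n - k⟩`,
`|(uv)^(n)|² ≤ K(n) · ∑ₖ ⟨k⟩|û(k)|² ⟨n - k⟩|v̂(n - k)|²` with `K(n) = ∑ₖ 1 / (⟨k⟩⟨n - k⟩)`.
Since `⟨n⟩ ≤ ⟨k⟩ + ⟨n - k⟩`, the terms of `K(n)` with `|k| ≤ 2⟨n⟩` are bounded by `⟨n⟩⁻¹` times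
two harmonic sums, hence contribute `O(log ⟨n⟩ / ⟨n⟩)`, and those with `|k| > 2⟨n⟩` are at most
`2 / k²`, contributing `O(1 / ⟨n⟩)`. So `⟨n⟩ / log(⟨n⟩ + 1) · |(uv)^(n)|²` is bounded by a constant
times the `n`-th term of the Cauchy product of the two `H^{1/2}` weight sequences, whose sum is
`‖u‖²_{1/2} ‖v‖²_{1/2}`.
-/

open Finset Real

section CauchySchwarz

variable {ι : Type*} {r f g : ι → ℝ}

theorem summable_of_sq_le_mul (hf0 : ∀ i, 0 ≤ f i) (hg0 : ∀ i, 0 ≤ g i) (hf : Summable f)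
    (hg : Summable g) (hr : ∀ i, r i ^ 2 ≤ f i * g i) : Summable r := by
  refine Summable.of_norm_bounded ((hf.add hg).div_const 2) fun i => ?_
  rw [Real.norm_eq_abs]
  refine abs_le_of_sq_le_sq ?_ (by linarith [hf0 i, hg0 i])
  nlinarith [hr i, sq_nonneg (f i - g i)]

theorem sq_tsum_le_tsum_mul_tsum_of_sq_le_mul (hf0 : ∀ i, 0 ≤ f i) (hg0 : ∀ i, 0 ≤ g i)
    (hf : Summable f) (hg : Summable g) (hr : ∀ i, r i ^ 2 ≤ f i * g i) :
    (∑' i, r i) ^ 2 ≤ (∑' i, f i) * ∑' i, g i :=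
  le_of_tendsto_of_tendsto' ((summable_of_sq_le_mul hf0 hg0 hf hg hr).hasSum.pow 2)
    (Filter.Tendsto.mul hf.hasSum hg.hasSum) fun s =>
      sum_sq_le_sum_mul_sum_of_sq_le_mul s (fun i _ => hf0 i) (fun i _ => hg0 i) fun i _ => hr i

end CauchySchwarz

section CauchyProduct

variable {G : Type*} [AddCommGroup G] {a b : G → ℝ}

theorem hasSum_prod_mul_sub (ha0 : ∀ k, 0 ≤ a k) (hb0 : ∀ k, 0 ≤ b k) (ha : Summable a)
    (hb : Summable b) :
    HasSum (fun p : G × G => a p.2 * b (p.1 - p.2)) ((∑' k, a k) * ∑' k, b k) := by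
  let e : G × G ≃ G × G :=
    ⟨fun p => (p.2, p.1 - p.2), fun q => (q.1 + q.2, q.1), fun p => by simp, fun q => by simp⟩
  exact e.hasSum_iff.2 (ha.hasSum.mul hb.hasSum (ha.mul_of_nonneg hb ha0 hb0))

theorem hasSum_tsum_mul_sub (ha0 : ∀ k, 0 ≤ a k) (hb0 : ∀ k, 0 ≤ b k) (ha : Summable a)
    (hb : Summable b) :
    HasSum (fun n => ∑' k, a k * b (n - k)) ((∑' k, a k) * ∑' k, b k) :=
  have h := hasSum_prod_mul_sub ha0 hb0 ha hb
  h.prod_fiberwise fun n => (h.summable.prod_factor n).hasSum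

end CauchyProduct

theorem sum_comp_natAbs_le {s : Finset ℤ} {t : Finset ℕ} {F : ℕ → ℝ} (hF : ∀ m, 0 ≤ F m)
    (hst : ∀ k ∈ s, k.natAbs ∈ t) : ∑ k ∈ s, F k.natAbs ≤ 2 * ∑ m ∈ t, F m := by
  rw [← sum_fiberwise_of_maps_to hst, mul_sum]
  refine sum_le_sum fun m _ => ?_
  have hfiber : {k ∈ s | k.natAbs = m} ⊆ {(m : ℤ), -(m : ℤ)} := fun k hk => by
    rw [mem_insert, mem_singleton, ← (mem_filter.1 hk).2]
    exact Int.natAbs_eq k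
  calc ∑ k ∈ s with k.natAbs = m, F k.natAbs
      = #{k ∈ s | k.natAbs = m} * F m := by
        rw [sum_congr rfl fun k hk => by rw [(mem_filter.1 hk).2], sum_const, nsmul_eq_mul]
    _ ≤ 2 * F m := by
        gcongr
        · exact hF m
        · exact_mod_cast (card_le_card hfiber).trans (card_insert_le _ _)

theorem wt_eq (n : ℤ) : wt n = max 1 |(n : ℝ)| := by
  rw [wt, Int.cast_max, Int.cast_abs, Int.cast_one]

theorem wt_eq_max_natAbs (n : ℤ) : wt n = max 1 (n.natAbs : ℝ) := by
  rw [wt_eq, Nat.cast_natAbs, Int.cast_abs]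

theorem one_le_wt (n : ℤ) : 1 ≤ wt n := by
  rw [wt_eq]; exact le_max_left _ _

theorem wt_pos (n : ℤ) : 0 < wt n := one_pos.trans_le (one_le_wt n)

theorem abs_le_wt (n : ℤ) : |(n : ℝ)| ≤ wt n := by
  rw [wt_eq]; exact le_max_right _ _

theorem wt_le_wt_add_wt_sub (n k : ℤ) : wt n ≤ wt k + wt (n - k) := by
  unfold wt
  have := abs_add_le k (n - k)
  rw [add_sub_cancel] at this
  exact_mod_cast (by omega : max 1 |n| ≤ max 1 |k| + max 1 |n - k|)

theorem sum_inv_wt_le_of_abs_le {M : ℝ} (hM : 1 ≤ M) {s : Finset ℤ}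
    (hs : ∀ k ∈ s, |(k : ℝ)| ≤ M) : ∑ k ∈ s, (wt k)⁻¹ ≤ 4 + 2 * log M := by
  have hsum : ∑ k ∈ s, (wt k)⁻¹ ≤ 2 * ∑ m ∈ range (⌊M⌋₊ + 1), (max 1 (m : ℝ))⁻¹ := by
    simp_rw [wt_eq_max_natAbs]
    refine sum_comp_natAbs_le (F := fun m : ℕ => (max 1 (m : ℝ))⁻¹) (fun m => by positivity)
      fun k hk => ?_
    rw [mem_range, Nat.lt_succ_iff]
    exact Nat.le_floor (by rw [Nat.cast_natAbs, Int.cast_abs]; exact hs k hk)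
  have hharmonic : ∑ m ∈ range (⌊M⌋₊ + 1), (max 1 (m : ℝ))⁻¹ = harmonic ⌊M⌋₊ + 1 := by
    simp [harmonic, sum_range_succ']
  have hlog : (harmonic ⌊M⌋₊ : ℝ) ≤ 1 + log M := by
    refine (harmonic_le_one_add_log _).trans ?_
    gcongr
    · exact_mod_cast Nat.floor_pos.2 hM
    · exact Nat.floor_le (by linarith)
  linarith

theorem sum_inv_wt_sq_le_of_lt_abs {M : ℝ} (hM : 0 < M) {s : Finset ℤ}
    (hs : ∀ k ∈ s, M < |(k : ℝ)|) : ∑ k ∈ s, (wt k ^ 2)⁻¹ ≤ 4 / M := by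
  have hterm : ∀ k ∈ s, (wt k ^ 2)⁻¹ = ((k.natAbs : ℝ) ^ 2)⁻¹ := fun k hk => by
    have hk : M < k.natAbs := by rw [Nat.cast_natAbs, Int.cast_abs]; exact hs k hk
    have : 0 < k.natAbs := by exact_mod_cast hM.trans hk
    rw [wt_eq_max_natAbs, max_eq_right (Nat.one_le_cast.2 this)]
  rw [sum_congr rfl hterm]
  calc ∑ k ∈ s, ((k.natAbs : ℝ) ^ 2)⁻¹
      ≤ 2 * ∑ m ∈ Ioo ⌊M⌋₊ (s.sup Int.natAbs + 1), ((m : ℝ) ^ 2)⁻¹ := by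
        refine sum_comp_natAbs_le (F := fun m : ℕ => ((m : ℝ) ^ 2)⁻¹) (fun m => by positivity)
          fun k hk => mem_Ioo.2 ⟨(Nat.floor_lt hM.le).2 ?_, Nat.lt_succ_of_le (le_sup hk)⟩
        rw [Nat.cast_natAbs, Int.cast_abs]; exact hs k hk
    _ ≤ 2 * (2 / (⌊M⌋₊ + 1)) := by gcongr; exact sum_Ioo_inv_sq_le _ _
    _ = 4 / (⌊M⌋₊ + 1) := by ring
    _ ≤ 4 / M := by gcongr; exact (Nat.lt_floor_add_one M).le

theorem inv_wt_mul_wt_sub_le (n k : ℤ) :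
    (wt k * wt (n - k))⁻¹ ≤ (wt n)⁻¹ * ((wt k)⁻¹ + (wt (n - k))⁻¹) := by
  have := wt_pos k
  have := wt_pos (n - k)
  calc (wt k * wt (n - k))⁻¹
      ≤ (wt n)⁻¹ * (wt k + wt (n - k)) * (wt k * wt (n - k))⁻¹ :=
        le_mul_of_one_le_left (by positivity)
          ((one_le_inv_mul₀ (wt_pos n)).2 (wt_le_wt_add_wt_sub n k))
    _ = (wt n)⁻¹ * ((wt k)⁻¹ + (wt (n - k))⁻¹) := by field_simp; ring

theorem inv_wt_mul_wt_sub_le_of_lt_abs {n k : ℤ} (hk : 2 * wt n < |(k : ℝ)|) :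
    (wt k * wt (n - k))⁻¹ ≤ 2 * (wt k ^ 2)⁻¹ := by
  have hwk : wt k = |(k : ℝ)| := by
    rw [wt_eq]; exact max_eq_right (by linarith [one_le_wt n])
  have hfar : wt k ≤ 2 * wt (n - k) := by
    have := abs_sub_abs_le_abs_sub (k : ℝ) n
    have := abs_le_wt (n - k)
    rw [Int.cast_sub, abs_sub_comm] at this
    linarith [abs_le_wt n]
  have := wt_pos k
  calc (wt k * wt (n - k))⁻¹ ≤ (wt k ^ 2 / 2)⁻¹ :=
        inv_anti₀ (by positivity) (by nlinarith)
    _ = 2 * (wt k ^ 2)⁻¹ := by rw [inv_div, div_eq_mul_inv]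

theorem sum_inv_wt_mul_wt_sub_le_of_abs_le {n : ℤ} {s : Finset ℤ}
    (hs : ∀ k ∈ s, |(k : ℝ)| ≤ 2 * wt n) :
    ∑ k ∈ s, (wt k * wt (n - k))⁻¹ ≤ (8 + 4 * log (3 * wt n)) / wt n := by
  have hN := one_le_wt n
  have hshift : ∑ k ∈ s, (wt (n - k))⁻¹ = ∑ j ∈ s.image (n - ·), (wt j)⁻¹ :=
    (sum_image (f := fun j => (wt j)⁻¹) fun _ _ _ _ h => sub_right_injective h).symm
  have himage : ∀ j ∈ s.image (n - ·), |(j : ℝ)| ≤ 3 * wt n := by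
    simp only [mem_image]
    rintro _ ⟨k, hk, rfl⟩
    rw [Int.cast_sub]
    linarith [abs_sub (n : ℝ) k, abs_le_wt n, hs k hk]
  calc ∑ k ∈ s, (wt k * wt (n - k))⁻¹
      ≤ ∑ k ∈ s, (wt n)⁻¹ * ((wt k)⁻¹ + (wt (n - k))⁻¹) :=
        sum_le_sum fun k _ => inv_wt_mul_wt_sub_le n k
    _ = (wt n)⁻¹ * (∑ k ∈ s, (wt k)⁻¹ + ∑ j ∈ s.image (n - ·), (wt j)⁻¹) := by
        rw [← mul_sum, sum_add_distrib, hshift]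
    _ ≤ (wt n)⁻¹ * ((4 + 2 * log (3 * wt n)) + (4 + 2 * log (3 * wt n))) := by
        gcongr
        · exact sum_inv_wt_le_of_abs_le (by linarith) fun k hk => (hs k hk).trans (by linarith)
        · exact sum_inv_wt_le_of_abs_le (by linarith) himage
    _ = (8 + 4 * log (3 * wt n)) / wt n := by rw [inv_mul_eq_div]; ring

theorem sum_inv_wt_mul_wt_sub_le_of_lt_abs {n : ℤ} {s : Finset ℤ}
    (hs : ∀ k ∈ s, 2 * wt n < |(k : ℝ)|) :
    ∑ k ∈ s, (wt k * wt (n - k))⁻¹ ≤ 4 / wt n := by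
  have := wt_pos n
  calc ∑ k ∈ s, (wt k * wt (n - k))⁻¹ ≤ ∑ k ∈ s, 2 * (wt k ^ 2)⁻¹ :=
        sum_le_sum fun k hk => inv_wt_mul_wt_sub_le_of_lt_abs (hs k hk)
    _ = 2 * ∑ k ∈ s, (wt k ^ 2)⁻¹ := (mul_sum _ _ _).symm
    _ ≤ 2 * (4 / (2 * wt n)) := by gcongr; exact sum_inv_wt_sq_le_of_lt_abs (by positivity) hs
    _ = 4 / wt n := by field_simp

theorem sum_inv_wt_mul_wt_sub_le (n : ℤ) (s : Finset ℤ) :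
    ∑ k ∈ s, (wt k * wt (n - k))⁻¹ ≤ 36 * log (wt n + 1) / wt n := by
  have hN := one_le_wt n
  rw [← sum_filter_add_sum_filter_not s fun k : ℤ => |(k : ℝ)| ≤ 2 * wt n]
  have hnear := sum_inv_wt_mul_wt_sub_le_of_abs_le (s := {k ∈ s | |(k : ℝ)| ≤ 2 * wt n})
    fun k hk => (mem_filter.1 hk).2
  have hfar := sum_inv_wt_mul_wt_sub_le_of_lt_abs (s := {k ∈ s | ¬|(k : ℝ)| ≤ 2 * wt n})
    fun k hk => not_le.1 (mem_filter.1 hk).2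
  have hlog : 8 + 4 * log (3 * wt n) + 4 ≤ 36 * log (wt n + 1) := by
    have hlog3 : log 3 ≤ 2 := by linarith [log_le_sub_one_of_pos (by norm_num : (0 : ℝ) < 3)]
    have hlog2 : log 2 ≤ log (wt n + 1) := log_le_log (by norm_num) (by linarith)
    have hlogN : log (wt n) ≤ log (wt n + 1) := log_le_log (by linarith) (by linarith)
    rw [log_mul (by norm_num) (by linarith)]
    linarith [log_two_gt_d9]
  calc _ ≤ (8 + 4 * log (3 * wt n)) / wt n + 4 / wt n := add_le_add hnear hfar
    _ = (8 + 4 * log (3 * wt n) + 4) / wt n := by ring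
    _ ≤ 36 * log (wt n + 1) / wt n := by gcongr

theorem inv_wt_mul_wt_sub_nonneg (n k : ℤ) : 0 ≤ (wt k * wt (n - k))⁻¹ :=
  inv_nonneg.2 (mul_pos (wt_pos k) (wt_pos (n - k))).le

theorem summable_inv_wt_mul_wt_sub (n : ℤ) : Summable fun k => (wt k * wt (n - k))⁻¹ :=
  summable_of_sum_le (inv_wt_mul_wt_sub_nonneg n) (sum_inv_wt_mul_wt_sub_le n)

theorem tsum_inv_wt_mul_wt_sub_le (n : ℤ) :
    ∑' k, (wt k * wt (n - k))⁻¹ ≤ 36 * log (wt n + 1) / wt n :=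
  Real.tsum_le_of_sum_le (inv_wt_mul_wt_sub_nonneg n) (sum_inv_wt_mul_wt_sub_le n)

theorem wt_mul_norm_sq_nonneg (w : ℤ → ℂ) (k : ℤ) : 0 ≤ wt k * ‖w k‖ ^ 2 :=
  mul_nonneg (wt_pos k).le (sq_nonneg _)

theorem norm_conv_sq_le (u v : ℤ → ℂ) (n : ℤ)
    (hT : Summable fun k => wt k * ‖u k‖ ^ 2 * (wt (n - k) * ‖v (n - k)‖ ^ 2)) :
    ‖conv u v n‖ ^ 2 ≤ (∑' k, (wt k * wt (n - k))⁻¹) *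
      ∑' k, wt k * ‖u k‖ ^ 2 * (wt (n - k) * ‖v (n - k)‖ ^ 2) := by
  have hT0 : ∀ k, 0 ≤ wt k * ‖u k‖ ^ 2 * (wt (n - k) * ‖v (n - k)‖ ^ 2) := fun k =>
    mul_nonneg (wt_mul_norm_sq_nonneg u k) (wt_mul_norm_sq_nonneg v (n - k))
  have hr : ∀ k, (‖u k‖ * ‖v (n - k)‖) ^ 2 ≤
      (wt k * wt (n - k))⁻¹ * (wt k * ‖u k‖ ^ 2 * (wt (n - k) * ‖v (n - k)‖ ^ 2)) := fun k => by
    have := wt_pos k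
    have := wt_pos (n - k)
    refine le_of_eq ?_
    field_simp
  have hr_summable := summable_of_sq_le_mul (inv_wt_mul_wt_sub_nonneg n) hT0
    (summable_inv_wt_mul_wt_sub n) hT hr
  have hnorm : ‖conv u v n‖ ≤ ∑' k, ‖u k‖ * ‖v (n - k)‖ := by
    simp only [conv, ← norm_mul]
    exact norm_tsum_le_tsum_norm (by simpa only [norm_mul] using hr_summable)
  calc ‖conv u v n‖ ^ 2 ≤ (∑' k, ‖u k‖ * ‖v (n - k)‖) ^ 2 := by gcongr
    _ ≤ _ := sq_tsum_le_tsum_mul_tsum_of_sq_le_mul (inv_wt_mul_wt_sub_nonneg n) hT0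
      (summable_inv_wt_mul_wt_sub n) hT hr

theorem weighted_norm_conv_sq_le (u v : ℤ → ℂ) (n : ℤ)
    (hT : Summable fun k => wt k * ‖u k‖ ^ 2 * (wt (n - k) * ‖v (n - k)‖ ^ 2)) :
    wt n / log (wt n + 1) * ‖conv u v n‖ ^ 2 ≤
      36 * ∑' k, wt k * ‖u k‖ ^ 2 * (wt (n - k) * ‖v (n - k)‖ ^ 2) := by
  have hN := wt_pos n
  have hlog : 0 < log (wt n + 1) := log_pos (by linarith)
  have hT0 : 0 ≤ ∑' k, wt k * ‖u k‖ ^ 2 * (wt (n - k) * ‖v (n - k)‖ ^ 2) := tsum_nonneg fun k =>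
    mul_nonneg (wt_mul_norm_sq_nonneg u k) (wt_mul_norm_sq_nonneg v (n - k))
  calc wt n / log (wt n + 1) * ‖conv u v n‖ ^ 2
      ≤ wt n / log (wt n + 1) * (36 * log (wt n + 1) / wt n *
          ∑' k, wt k * ‖u k‖ ^ 2 * (wt (n - k) * ‖v (n - k)‖ ^ 2)) := by
        gcongr
        exact (norm_conv_sq_le u v n hT).trans (by gcongr; exact tsum_inv_wt_mul_wt_sub_le n)
    _ = 36 * ∑' k, wt k * ‖u k‖ ^ 2 * (wt (n - k) * ‖v (n - k)‖ ^ 2) := by field_simp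

/-- The product of two `H^{1/2}` functions lies in `H^{1/2,1/√log}`, with a bilinear bound,
expressed via Fourier coefficients. -/
theorem stmt_13 : ∃ C > (0 : ℝ), ∀ u v : ℤ → ℂ,
    Summable (fun n : ℤ => wt n * ‖u n‖ ^ 2) →
    Summable (fun n : ℤ => wt n * ‖v n‖ ^ 2) →
    Summable (fun n : ℤ => (wt n / Real.log (wt n + 1)) * ‖conv u v n‖ ^ 2) ∧
    ∑' n : ℤ, (wt n / Real.log (wt n + 1)) * ‖conv u v n‖ ^ 2
      ≤ C ^ 2 * (∑' n : ℤ, wt n * ‖u n‖ ^ 2) * (∑' n : ℤ, wt n * ‖v n‖ ^ 2) := by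
  refine ⟨6, by norm_num, fun u v hu hv => ?_⟩
  have hprod := hasSum_prod_mul_sub (wt_mul_norm_sq_nonneg u) (wt_mul_norm_sq_nonneg v) hu hv
  have hconv := hasSum_tsum_mul_sub (wt_mul_norm_sq_nonneg u) (wt_mul_norm_sq_nonneg v) hu hv
  have hbound n := weighted_norm_conv_sq_le u v n (hprod.summable.prod_factor n)
  have hweight : ∀ n, 0 ≤ wt n / log (wt n + 1) * ‖conv u v n‖ ^ 2 := fun n =>
    mul_nonneg (div_nonneg (wt_pos n).le (log_nonneg (by linarith [one_le_wt n]))) (sq_nonneg _)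
  have hsummable := Summable.of_nonneg_of_le hweight hbound (hconv.summable.mul_left 36)
  refine ⟨hsummable, ?_⟩
  calc _ ≤ ∑' n, 36 * ∑' k, wt k * ‖u k‖ ^ 2 * (wt (n - k) * ‖v (n - k)‖ ^ 2) :=
        hsummable.tsum_le_tsum hbound (hconv.summable.mul_left 36)
    _ = 6 ^ 2 * (∑' n, wt n * ‖u n‖ ^ 2) * ∑' n, wt n * ‖v n‖ ^ 2 := by
        rw [tsum_mul_left, hconv.tsum_eq]; ring
end

section
/- There exists a constant K₀ > 0 such that for any u ∈ H^{-1/2,√log}(𝕋,ℂ) and v ∈ H^{1/2}(𝕋,ℂ), the product uv lies in H^{-1/2}(𝕋,ℂ) and ‖uv‖_{-1/2} ≤ K₀ ‖u‖_{-1/2,√log} ‖v‖_{1/2}. -/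
open scoped ENNReal
open Finset

theorem ENNReal.tsum_mul_sq_le_sq_mul_sq {ι : Type*} (f g : ι → ℝ≥0∞) :
    (∑' i, f i * g i) ^ 2 ≤ (∑' i, f i ^ 2) * ∑' i, g i ^ 2 := by
  let _ : MeasurableSpace ι := ⊤
  have h := ENNReal.lintegral_mul_le_Lp_mul_Lq (MeasureTheory.Measure.count : MeasureTheory.Measure ι)
    Real.HolderConjugate.two_two (measurable_from_top (f := f)).aemeasurable
    (measurable_from_top (f := g)).aemeasurable
  simp only [MeasureTheory.lintegral_count, Pi.mul_apply, ENNReal.rpow_two] at h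
  calc (∑' i, f i * g i) ^ 2
      ≤ ((∑' i, f i ^ 2) ^ (1 / 2 : ℝ) * (∑' i, g i ^ 2) ^ (1 / 2 : ℝ)) ^ 2 :=
        pow_le_pow_left₀ bot_le h 2
    _ = (∑' i, f i ^ 2) * ∑' i, g i ^ 2 := by
        rw [mul_pow, ← ENNReal.rpow_natCast, ← ENNReal.rpow_natCast, ← ENNReal.rpow_mul,
          ← ENNReal.rpow_mul]
        norm_num

theorem ENNReal.tsum_mul_sq_le_sq_mul_sq_weighted {ι : Type*} (f g w : ι → ℝ≥0∞)
    (hw₀ : ∀ i, w i ≠ 0) (hw : ∀ i, w i ≠ ∞) :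
    (∑' i, f i * g i) ^ 2 ≤ (∑' i, w i * f i ^ 2) * ∑' i, g i ^ 2 / w i := by
  set s : ι → ℝ≥0∞ := fun i => w i ^ (1 / 2 : ℝ)
  have hs_sq (i : ι) : s i ^ 2 = w i := by
    rw [← ENNReal.rpow_natCast, ← ENNReal.rpow_mul]; norm_num
  have hs₀ (i : ι) : s i ≠ 0 := by simp [s, hw₀ i]
  have hs (i : ι) : s i ≠ ∞ := by simp [s, hw i]
  calc (∑' i, f i * g i) ^ 2 = (∑' i, (s i * f i) * (g i / s i)) ^ 2 := by
        congr 1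
        refine tsum_congr fun i => ?_
        calc f i * g i = f i * g i * (s i * (s i)⁻¹) := by
              rw [ENNReal.mul_inv_cancel (hs₀ i) (hs i), mul_one]
          _ = s i * f i * (g i / s i) := by rw [div_eq_mul_inv]; ring
    _ ≤ (∑' i, (s i * f i) ^ 2) * ∑' i, (g i / s i) ^ 2 := ENNReal.tsum_mul_sq_le_sq_mul_sq _ _
    _ = (∑' i, w i * f i ^ 2) * ∑' i, g i ^ 2 / w i := by
        simp only [mul_pow, div_eq_mul_inv, ← ENNReal.inv_pow, hs_sq]

lemma ENNReal.inv_le_two_mul_inv {x y : ℝ≥0∞} (h : x ≤ 2 * y) : y⁻¹ ≤ 2 * x⁻¹ := by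
  calc y⁻¹ ≤ (x / 2)⁻¹ := ENNReal.inv_le_inv.mpr (ENNReal.div_le_of_le_mul (by rwa [mul_comm]))
    _ = 2 * x⁻¹ := by rw [ENNReal.inv_div (by simp) (by simp), div_eq_mul_inv]

lemma ENNReal.tsum_comp_natAbs_le_two_mul (F : ℕ → ℝ≥0∞) :
    ∑' m : ℤ, F m.natAbs ≤ 2 * ∑' j, F j := by
  have h := tsum_nat_add_neg (f := fun m : ℤ => F m.natAbs) ENNReal.summable
  simp only [Int.natAbs_natCast, Int.natAbs_neg, ENNReal.tsum_add] at h
  rw [two_mul, h]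
  exact le_self_add

lemma summable_and_tsum_le_of_tsum_ofReal_le {ι : Type*} {f : ι → ℝ} {c : ℝ}
    (hf : ∀ i, 0 ≤ f i) (hc : 0 ≤ c) (h : ∑' i, ENNReal.ofReal (f i) ≤ ENNReal.ofReal c) :
    Summable f ∧ ∑' i, f i ≤ c := by
  have hs : Summable f :=
    (ENNReal.summable_toReal (ne_top_of_le_ne_top ENNReal.ofReal_ne_top h)).congr
      fun i => ENNReal.toReal_ofReal (hf i)
  refine ⟨hs, ?_⟩
  rwa [← ENNReal.ofReal_le_ofReal_iff hc, ENNReal.ofReal_tsum_of_nonneg hf hs]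

def natWt (n : ℤ) : ℕ := max 1 n.natAbs

lemma wt_eq_natWt (n : ℤ) : wt n = natWt n := by
  simp [wt, natWt, Int.cast_max, Nat.cast_max]

lemma one_le_natWt (n : ℤ) : 1 ≤ natWt n := le_max_left _ _

lemma natWt_ne_zero (n : ℤ) : (natWt n : ℝ≥0∞) ≠ 0 :=
  Nat.cast_ne_zero.mpr (by have := one_le_natWt n; omega)

lemma sum_range_succ_inv_max_one_le (K : ℕ) :
    ∑ j ∈ range (K + 1), ((max 1 j : ℕ) : ℝ)⁻¹ ≤ 2 + Real.log K := by
  have h := harmonic_le_one_add_log K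
  simp only [harmonic, Rat.cast_sum, Rat.cast_inv, Rat.cast_natCast] at h
  rw [sum_range_succ']
  have hmax (x : ℕ) : max 1 (x + 1) = x + 1 := max_eq_right (by omega)
  simp only [hmax, max_eq_left (zero_le_one' ℕ), Nat.cast_one, inv_one]
  linarith

lemma sum_range_inv_mul_max_le {K : ℕ} (hK : 1 ≤ K) (N : ℕ) :
    ∑ j ∈ range N, ((max 1 j * max j K : ℕ) : ℝ)⁻¹ ≤ (4 + Real.log K) / K := by
  have hsub : range N ⊆ range (K + 1) ∪ Ioo K N := by
    intro j; simp only [mem_range, mem_union, mem_Ioo]; omega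
  have hdisj : Disjoint (range (K + 1)) (Ioo K N) := by
    rw [disjoint_left]; intro j; simp only [mem_range, mem_Ioo]; omega
  have hlow : ∑ j ∈ range (K + 1), ((max 1 j * max j K : ℕ) : ℝ)⁻¹
      = (∑ j ∈ range (K + 1), ((max 1 j : ℕ) : ℝ)⁻¹) / K := by
    rw [sum_div]
    refine sum_congr rfl fun j hj => ?_
    rw [show max j K = K from max_eq_right (by simpa [Nat.lt_succ_iff] using hj), Nat.cast_mul,
      mul_inv, div_eq_mul_inv]
  have hhigh : ∑ j ∈ Ioo K N, ((max 1 j * max j K : ℕ) : ℝ)⁻¹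
      = ∑ j ∈ Ioo K N, ((j : ℝ) ^ 2)⁻¹ := by
    refine sum_congr rfl fun j hj => ?_
    obtain ⟨hKj, -⟩ := mem_Ioo.mp hj
    rw [max_eq_right (by omega), max_eq_left hKj.le]
    push_cast; ring
  calc ∑ j ∈ range N, ((max 1 j * max j K : ℕ) : ℝ)⁻¹
      ≤ ∑ j ∈ range (K + 1) ∪ Ioo K N, ((max 1 j * max j K : ℕ) : ℝ)⁻¹ :=
        sum_le_sum_of_subset_of_nonneg hsub fun _ _ _ => by positivity
    _ = (∑ j ∈ range (K + 1), ((max 1 j : ℕ) : ℝ)⁻¹) / K + ∑ j ∈ Ioo K N, ((j : ℝ) ^ 2)⁻¹ := by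
        rw [sum_union hdisj, hlow, hhigh]
    _ ≤ (2 + Real.log K) / K + 2 / K := by
        gcongr
        · exact sum_range_succ_inv_max_one_le K
        · exact (sum_Ioo_inv_sq_le K N).trans (by gcongr; linarith)
    _ = (4 + Real.log K) / K := by ring

noncomputable def invMulMax (K j : ℕ) : ℝ≥0∞ := ((max 1 j * max j K : ℕ) : ℝ≥0∞)⁻¹

lemma tsum_invMulMax_le {K : ℕ} (hK : 1 ≤ K) :
    ∑' j, invMulMax K j ≤ ENNReal.ofReal ((4 + Real.log K) / K) := by
  refine ENNReal.tsum_le_of_sum_range_le fun N => ?_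
  have hpos (j : ℕ) : 0 < ((max 1 j * max j K : ℕ) : ℝ) := by
    have : 0 < max 1 j * max j K := Nat.mul_pos (by omega) (by omega)
    exact_mod_cast this
  calc ∑ j ∈ range N, invMulMax K j
      = ENNReal.ofReal (∑ j ∈ range N, ((max 1 j * max j K : ℕ) : ℝ)⁻¹) := by
        rw [ENNReal.ofReal_sum_of_nonneg fun j _ => (inv_pos.mpr (hpos j)).le]
        refine sum_congr rfl fun j _ => ?_
        rw [invMulMax, ENNReal.ofReal_inv_of_pos (hpos j), ENNReal.ofReal_natCast]
    _ ≤ _ := ENNReal.ofReal_le_ofReal (sum_range_inv_mul_max_le hK N)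

lemma inv_max_one_mul_inv_max_one_le {a b K : ℕ} (h : K ≤ max 1 a + max 1 b) :
    ((max 1 a : ℕ) : ℝ≥0∞)⁻¹ * ((max 1 b : ℕ) : ℝ≥0∞)⁻¹
      ≤ 2 * invMulMax K a + 2 * invMulMax K b := by
  rw [← ENNReal.mul_inv (by simp) (by simp), ← Nat.cast_mul]
  rcases le_total (max 1 a) (max 1 b) with hab | hab
  · refine le_add_right (ENNReal.inv_le_two_mul_inv ?_)
    have : max a K ≤ 2 * max 1 b := by omega
    exact_mod_cast (show max 1 a * max a K ≤ 2 * (max 1 a * max 1 b) from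
      (Nat.mul_le_mul_left _ this).trans_eq (by ring))
  · refine le_add_left (ENNReal.inv_le_two_mul_inv ?_)
    have : max b K ≤ 2 * max 1 a := by omega
    exact_mod_cast (show max 1 b * max b K ≤ 2 * (max 1 a * max 1 b) from
      (Nat.mul_le_mul_left _ this).trans_eq (by ring))

lemma four_add_log_le_eight_mul_log_add_one {x : ℝ} (hx : 1 ≤ x) :
    4 + Real.log x ≤ 8 * Real.log (x + 1) := by
  have h2 : Real.log 2 ≤ Real.log (x + 1) := Real.log_le_log (by norm_num) (by linarith)
  have hx1 : Real.log x ≤ Real.log (x + 1) := Real.log_le_log (by linarith) (by linarith)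
  have := Real.log_two_gt_d9
  linarith

lemma tsum_inv_natWt_mul_inv_natWt_sub_le (k : ℤ) :
    ∑' n : ℤ, (natWt n : ℝ≥0∞)⁻¹ * (natWt (n - k) : ℝ≥0∞)⁻¹
      ≤ 64 * ENNReal.ofReal (Real.log (natWt k + 1) / natWt k) := by
  set K := natWt k
  have hpt (n : ℤ) : (natWt n : ℝ≥0∞)⁻¹ * (natWt (n - k) : ℝ≥0∞)⁻¹
      ≤ 2 * invMulMax K n.natAbs + 2 * invMulMax K (n - k).natAbs := by
    refine inv_max_one_mul_inv_max_one_le ?_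
    have := Int.natAbs_sub_le n (n - k)
    rw [sub_sub_cancel] at this
    simp only [K, natWt]
    omega
  have hshift : ∑' n : ℤ, invMulMax K (n - k).natAbs = ∑' n : ℤ, invMulMax K n.natAbs :=
    (Equiv.subRight k).tsum_eq fun n => invMulMax K n.natAbs
  have hK : (1 : ℝ) ≤ K := by exact_mod_cast one_le_natWt k
  calc _ ≤ ∑' n : ℤ, (2 * invMulMax K n.natAbs + 2 * invMulMax K (n - k).natAbs) :=
        ENNReal.tsum_le_tsum hpt
    _ = 4 * ∑' n : ℤ, invMulMax K n.natAbs := by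
        rw [ENNReal.tsum_add, ENNReal.tsum_mul_left, ENNReal.tsum_mul_left, hshift, ← add_mul]
        norm_num
    _ ≤ 4 * (2 * ENNReal.ofReal ((4 + Real.log K) / K)) := by
        gcongr
        exact (ENNReal.tsum_comp_natAbs_le_two_mul _).trans
          (by gcongr; exact tsum_invMulMax_le (one_le_natWt k))
    _ ≤ 64 * ENNReal.ofReal (Real.log (K + 1) / K) := by
        rw [← mul_assoc, show (64 : ℝ≥0∞) = 4 * 2 * 8 by norm_num, mul_assoc _ 8]
        gcongr
        rw [← ENNReal.ofReal_ofNat 8, ← ENNReal.ofReal_mul (by norm_num), mul_div_assoc']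
        exact ENNReal.ofReal_le_ofReal
          (by gcongr; exact four_add_log_le_eight_mul_log_add_one hK)

lemma enorm_conv_sq_le (u v : ℤ → ℂ) (n : ℤ) :
    ‖conv u v n‖ₑ ^ 2
      ≤ (∑' m, (natWt m : ℝ≥0∞) * ‖v m‖ₑ ^ 2) * ∑' k, ‖u k‖ₑ ^ 2 / natWt (n - k) := by
  calc ‖conv u v n‖ₑ ^ 2 ≤ (∑' k, ‖v (n - k)‖ₑ * ‖u k‖ₑ) ^ 2 := by
        gcongr
        refine enorm_tsum_le_tsum_enorm.trans_eq (tsum_congr fun k => ?_)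
        rw [enorm_mul, mul_comm]
    _ ≤ (∑' k, (natWt (n - k) : ℝ≥0∞) * ‖v (n - k)‖ₑ ^ 2) * ∑' k, ‖u k‖ₑ ^ 2 / natWt (n - k) :=
        ENNReal.tsum_mul_sq_le_sq_mul_sq_weighted _ _ _ (fun _ => natWt_ne_zero _)
          (fun _ => ENNReal.natCast_ne_top _)
    _ = _ := by
        congr 1
        exact (Equiv.subLeft n).tsum_eq fun m => (natWt m : ℝ≥0∞) * ‖v m‖ₑ ^ 2

theorem tsum_enorm_conv_sq_div_natWt_le (u v : ℤ → ℂ) :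
    ∑' n, ‖conv u v n‖ₑ ^ 2 / natWt n
      ≤ 64 * (∑' k, ENNReal.ofReal (Real.log (natWt k + 1) / natWt k) * ‖u k‖ₑ ^ 2) *
          ∑' m, (natWt m : ℝ≥0∞) * ‖v m‖ₑ ^ 2 := by
  have hconv := enorm_conv_sq_le u v
  set V := ∑' m, (natWt m : ℝ≥0∞) * ‖v m‖ₑ ^ 2
  clear_value V
  calc ∑' n, ‖conv u v n‖ₑ ^ 2 / natWt n
      ≤ ∑' n, V * (∑' k, ‖u k‖ₑ ^ 2 / natWt (n - k)) / natWt n :=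
        ENNReal.tsum_le_tsum fun n => by gcongr; exact hconv n
    _ = V * ∑' k, ‖u k‖ₑ ^ 2 * ∑' n, (natWt n : ℝ≥0∞)⁻¹ * (natWt (n - k) : ℝ≥0∞)⁻¹ := by
        have hterm (n : ℤ) : V * (∑' k, ‖u k‖ₑ ^ 2 / natWt (n - k)) / natWt n
            = V * ∑' k, ‖u k‖ₑ ^ 2 * ((natWt n : ℝ≥0∞)⁻¹ * (natWt (n - k) : ℝ≥0∞)⁻¹) := by
          rw [div_eq_mul_inv, mul_assoc, ← ENNReal.tsum_mul_right]
          refine congrArg (V * ·) (tsum_congr fun k => ?_)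
          rw [div_eq_mul_inv]
          ring
        simp_rw [hterm, ENNReal.tsum_mul_left]
        rw [ENNReal.tsum_comm (f := fun n k =>
          ‖u k‖ₑ ^ 2 * ((natWt n : ℝ≥0∞)⁻¹ * (natWt (n - k) : ℝ≥0∞)⁻¹))]
        simp_rw [ENNReal.tsum_mul_left]
    _ ≤ V * ∑' k, ‖u k‖ₑ ^ 2 * (64 * ENNReal.ofReal (Real.log (natWt k + 1) / natWt k)) := by
        gcongr with k
        exact tsum_inv_natWt_mul_inv_natWt_sub_le k
    _ = _ := by
        have hterm (k : ℤ) :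
            ‖u k‖ₑ ^ 2 * (64 * ENNReal.ofReal (Real.log (natWt k + 1) / natWt k))
              = 64 * (ENNReal.ofReal (Real.log (natWt k + 1) / natWt k) * ‖u k‖ₑ ^ 2) := by
          ring
        simp_rw [hterm, ENNReal.tsum_mul_left]
        ring

/-- The bilinear estimate `H^{-1/2,√log} × H^{1/2} → H^{-1/2}`:
`‖uv‖_{-1/2} ≤ K₀ ‖u‖_{-1/2,√log} ‖v‖_{1/2}`, expressed via Fourier coefficients. -/
theorem stmt_14 : ∃ K₀ > (0 : ℝ), ∀ u v : ℤ → ℂ,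
    Summable (fun n : ℤ => (Real.log (wt n + 1) / wt n) * ‖u n‖ ^ 2) →
    Summable (fun n : ℤ => wt n * ‖v n‖ ^ 2) →
    Summable (fun n : ℤ => ‖conv u v n‖ ^ 2 / wt n) ∧
    ∑' n : ℤ, ‖conv u v n‖ ^ 2 / wt n
      ≤ K₀ ^ 2 * (∑' n : ℤ, (Real.log (wt n + 1) / wt n) * ‖u n‖ ^ 2) *
          (∑' n : ℤ, wt n * ‖v n‖ ^ 2) := by
  refine ⟨8, by norm_num, fun u v hu hv => ?_⟩
  simp only [wt_eq_natWt] at hu hv ⊢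
  have hpos (n : ℤ) : (0 : ℝ) < natWt n := by exact_mod_cast one_le_natWt n
  have hlog (n : ℤ) : 0 ≤ Real.log (natWt n + 1) / natWt n :=
    div_nonneg (Real.log_nonneg (by linarith [hpos n])) (hpos n).le
  have hU (n : ℤ) := mul_nonneg (hlog n) (sq_nonneg ‖u n‖)
  have hV (n : ℤ) : 0 ≤ (natWt n : ℝ) * ‖v n‖ ^ 2 := by positivity
  refine summable_and_tsum_le_of_tsum_ofReal_le (fun n => by positivity)
    (mul_nonneg (mul_nonneg (by norm_num) (tsum_nonneg hU)) (tsum_nonneg hV)) ?_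
  rw [ENNReal.ofReal_mul (mul_nonneg (by norm_num) (tsum_nonneg hU)),
    ENNReal.ofReal_mul (by norm_num), ENNReal.ofReal_tsum_of_nonneg hU hu,
    ENNReal.ofReal_tsum_of_nonneg hV hv]
  convert tsum_enorm_conv_sq_div_natWt_le u v using 3
  · rw [ENNReal.ofReal_div_of_pos (hpos _), ENNReal.ofReal_pow (norm_nonneg _), ofReal_norm,
      ENNReal.ofReal_natCast]
  · norm_num
  · refine tsum_congr fun n => ?_
    rw [ENNReal.ofReal_mul (hlog n), ENNReal.ofReal_pow (norm_nonneg _), ofReal_norm]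
  · funext n
    rw [ENNReal.ofReal_mul (hpos n).le, ENNReal.ofReal_natCast, ENNReal.ofReal_pow (norm_nonneg _),
      ofReal_norm]
end

section
/- Let 0 < q < 1, β > 1, and ε = β/|log(1−q)|. Then ∑_{n=1}^∞ (log(1+n)/n) q^{2n} ∼ (1/2)(log(1−q))² as q → 1⁻; consequently, the function u_{0,q}(x) = v_q(e^{ix}) + conj(v_q(e^{ix})) with v_q(z) = εqz/(1−qz) satisfies ‖u_{0,q}‖²_{-1/2,√log} → β² as q → 1⁻, while each Fourier coefficient û_{0,q}(n) = ε q^{n+1} → 0; hence u_{0,q} converges weakly to 0 in H^{-1/2,√log}_{r,0} but not in norm. -/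
/-!
Write `L = log (1 - r)`. Squaring the logarithmic series `-L = ∑ rⁿ/n` (Cauchy product, with
the partial fractions `1/(k(n-k)) = (1/k + 1/(n-k))/n`) gives `L²/2 = ∑ (H_{n-1}/n) rⁿ`.
Since `|log (n + 1) - H_{n-1}| ≤ 1`, the series `∑ (log (1 + n)/n) rⁿ` differs from `L²/2`
by at most `∑ rⁿ/n = -L`, so it is `∼ L²/2` as `r → 1⁻`. At `r = q²` one has
`log (1 - q²) = log (1 - q) + log (1 + q) ∼ log (1 - q)`, and the remaining limits follow.
-/

open Filter Finset Topology

theorem sum_antidiagonal_inv_mul_succ (n : ℕ) :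
    ∑ p ∈ antidiagonal n, (((p.1 : ℝ) + 1) * ((p.2 : ℝ) + 1))⁻¹ =
      2 * harmonic (n + 1) / (n + 2) := by
  have hsplit : ∀ p ∈ antidiagonal n, (((p.1 : ℝ) + 1) * ((p.2 : ℝ) + 1))⁻¹ =
      ((p.1 : ℝ) + 1)⁻¹ / (n + 2) + ((p.2 : ℝ) + 1)⁻¹ / (n + 2) := by
    intro p hp
    have hsum : (p.1 : ℝ) + p.2 = n := by exact_mod_cast mem_antidiagonal.mp hp
    field_simp
    linarith
  have hfst : ∑ p ∈ antidiagonal n, ((p.1 : ℝ) + 1)⁻¹ = harmonic (n + 1) := by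
    rw [Nat.sum_antidiagonal_eq_sum_range_succ (fun i _ => ((i : ℝ) + 1)⁻¹), harmonic]
    push_cast; rfl
  have hsnd :
      ∑ p ∈ antidiagonal n, ((p.2 : ℝ) + 1)⁻¹ = ∑ p ∈ antidiagonal n, ((p.1 : ℝ) + 1)⁻¹ :=
    Nat.sum_antidiagonal_swap (f := fun p => ((p.1 : ℝ) + 1)⁻¹)
  rw [sum_congr rfl hsplit, sum_add_distrib, ← sum_div, ← sum_div, hsnd, hfst]
  ring

theorem hasSum_harmonic_div_mul_pow {r : ℝ} (hr : |r| < 1) :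
    HasSum (fun n : ℕ => harmonic n / (n + 1) * r ^ (n + 1)) (Real.log (1 - r) ^ 2 / 2) := by
  set a : ℕ → ℝ := fun n => r ^ (n + 1) / (n + 1)
  set f : ℕ → ℝ := fun n => harmonic n / (n + 1) * r ^ (n + 1)
  have ha : HasSum a (-Real.log (1 - r)) := Real.hasSum_pow_div_log_of_abs_lt_one hr
  have ha_norm : Summable fun n => ‖a n‖ :=
    (Real.hasSum_pow_div_log_of_abs_lt_one (x := |r|) (by rwa [abs_abs])).summable.congr
      fun n => by simp [a, norm_div, abs_of_pos (n.cast_add_one_pos : (0 : ℝ) < n + 1)]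
  have hprod :
      HasSum (fun n => ∑ p ∈ antidiagonal n, a p.1 * a p.2) (Real.log (1 - r) ^ 2) := by
    have h := (summable_norm_sum_mul_antidiagonal_of_summable_norm ha_norm ha_norm).of_norm.hasSum
    rwa [← tsum_mul_tsum_eq_tsum_sum_antidiagonal_of_summable_norm ha_norm ha_norm, ha.tsum_eq,
      neg_mul_neg, ← sq] at h
  have hcoeff : ∀ n, ∑ p ∈ antidiagonal n, a p.1 * a p.2 = 2 * f (n + 1) := by
    intro n
    have hpow : ∀ p ∈ antidiagonal n, a p.1 * a p.2 =
        r ^ (n + 2) * (((p.1 : ℝ) + 1) * ((p.2 : ℝ) + 1))⁻¹ := by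
      intro p hp
      rw [← mem_antidiagonal.mp hp, mul_inv]
      simp only [a]
      ring
    rw [sum_congr rfl hpow, ← mul_sum, sum_antidiagonal_inv_mul_succ]
    simp only [f]
    push_cast
    ring
  have hshift : HasSum (fun n => f (n + 1)) (Real.log (1 - r) ^ 2 / 2) := by
    simpa [hcoeff] using hprod.div_const 2
  simpa [f] using (hasSum_nat_add_iff 1).mp hshift

theorem abs_log_add_two_sub_harmonic_le_one (n : ℕ) : |Real.log (n + 2) - harmonic n| ≤ 1 := by
  have hlower : Real.log (n + 2) ≤ harmonic n + 1 := by
    have h := log_add_one_le_harmonic (n + 1)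
    rw [harmonic_succ] at h
    push_cast at h
    have hinv : ((n : ℝ) + 1)⁻¹ ≤ 1 :=
      inv_le_one_of_one_le₀ (by linarith [n.cast_nonneg (α := ℝ)])
    rw [add_assoc, one_add_one_eq_two] at h
    linarith
  have hupper : (harmonic n : ℝ) ≤ 1 + Real.log (n + 2) := by
    have hlog : Real.log n ≤ Real.log (n + 2) := by
      rcases n.eq_zero_or_pos with rfl | hn
      · simpa using Real.log_nonneg (by norm_num : (1 : ℝ) ≤ 2)
      · exact Real.log_le_log (by exact_mod_cast hn) (by linarith)
    linarith [harmonic_le_one_add_log n]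
  rw [abs_le]
  constructor <;> linarith

noncomputable def logDivSeries (r : ℝ) : ℝ :=
  ∑' n : ℕ, Real.log (n + 2) / (n + 1) * r ^ (n + 1)

theorem abs_logDivSeries_sub_le {r : ℝ} (hr₀ : 0 ≤ r) (hr₁ : r < 1) :
    |logDivSeries r - Real.log (1 - r) ^ 2 / 2| ≤ -Real.log (1 - r) := by
  set g : ℕ → ℝ := fun n => Real.log (n + 2) / (n + 1) * r ^ (n + 1)
  set h : ℕ → ℝ := fun n => harmonic n / (n + 1) * r ^ (n + 1)
  have hh := hasSum_harmonic_div_mul_pow (abs_lt.mpr ⟨by linarith, hr₁⟩)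
  have hb : HasSum (fun n : ℕ => r ^ (n + 1) / (n + 1)) (-Real.log (1 - r)) :=
    Real.hasSum_pow_div_log_of_abs_lt_one (abs_lt.mpr ⟨by linarith, hr₁⟩)
  have hdiff : ∀ n, ‖g n - h n‖ ≤ r ^ (n + 1) / (n + 1) := by
    intro n
    have hn : (0 : ℝ) < n + 1 := n.cast_add_one_pos
    calc ‖g n - h n‖ = |Real.log (n + 2) - harmonic n| / (n + 1) * r ^ (n + 1) := by
          simp only [g, h, Real.norm_eq_abs, ← sub_mul, ← sub_div, abs_mul, abs_div,
            abs_of_pos hn, abs_of_nonneg (pow_nonneg hr₀ _)]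
      _ ≤ 1 / (n + 1) * r ^ (n + 1) := by
          gcongr
          exact abs_log_add_two_sub_harmonic_le_one n
      _ = r ^ (n + 1) / (n + 1) := by ring
  have hg : Summable g := by
    simpa [h] using (Summable.of_norm_bounded hb.summable hdiff).add hh.summable
  rw [logDivSeries, ← hh.tsum_eq, ← hg.tsum_sub hh.summable]
  exact tsum_of_norm_bounded hb hdiff

theorem tendsto_log_one_sub_nhdsLT_one :
    Tendsto (fun r : ℝ => Real.log (1 - r)) (𝓝[<] 1) atBot := by
  refine Real.tendsto_log_nhdsGT_zero.comp ?_
  have h : Tendsto (fun r : ℝ => 1 - r) (𝓝 1) (𝓝 0) := by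
    simpa using (continuous_sub_left (1 : ℝ)).tendsto 1
  exact tendsto_nhdsWithin_of_tendsto_nhds_of_eventually_within _ (h.mono_left nhdsWithin_le_nhds)
    (eventually_nhdsWithin_of_forall fun r hr => Set.mem_Ioi.mpr (sub_pos.mpr hr))

theorem tendsto_logDivSeries_div_sq :
    Tendsto (fun r => logDivSeries r / Real.log (1 - r) ^ 2) (𝓝[<] 1) (𝓝 (1 / 2)) := by
  have hbound : ∀ᶠ r in 𝓝[<] 1,
      ‖logDivSeries r / Real.log (1 - r) ^ 2 - 1 / 2‖ ≤ 1 / (-Real.log (1 - r)) := by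
    filter_upwards [Ioo_mem_nhdsLT (zero_lt_one' ℝ)] with r hr
    set L := Real.log (1 - r)
    have hneg : L < 0 := Real.log_neg (by linarith [hr.2]) (by linarith [hr.1])
    have hL0 : L ≠ 0 := hneg.ne
    have hsq : 0 < L ^ 2 := by positivity
    calc ‖logDivSeries r / L ^ 2 - 1 / 2‖ = |logDivSeries r - L ^ 2 / 2| / L ^ 2 := by
          rw [Real.norm_eq_abs, ← abs_of_pos hsq, ← abs_div, abs_of_pos hsq]
          congr 1
          field_simp
      _ ≤ -L / L ^ 2 := by gcongr; exact abs_logDivSeries_sub_le hr.1.le hr.2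
      _ = 1 / -L := by field_simp
  rw [tendsto_iff_norm_sub_tendsto_zero]
  exact squeeze_zero' (Eventually.of_forall fun _ => norm_nonneg _) hbound
    (tendsto_const_nhds.div_atTop (tendsto_neg_atBot_atTop.comp tendsto_log_one_sub_nhdsLT_one))

theorem tendsto_sq_nhdsLT_one : Tendsto (fun q : ℝ => q ^ 2) (𝓝[<] 1) (𝓝[<] 1) := by
  refine tendsto_nhdsWithin_of_tendsto_nhds_of_eventually_within _ ?_ ?_
  · simpa using ((continuous_pow 2).tendsto (1 : ℝ)).mono_left nhdsWithin_le_nhds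
  · filter_upwards [Ioo_mem_nhdsLT (zero_lt_one' ℝ)] with q hq
    exact pow_lt_one₀ hq.1.le hq.2 two_ne_zero

theorem tendsto_log_one_sub_sq_div_log_one_sub :
    Tendsto (fun q : ℝ => Real.log (1 - q ^ 2) / Real.log (1 - q)) (𝓝[<] 1) (𝓝 1) := by
  have hlog : Tendsto (fun q : ℝ => Real.log (1 + q)) (𝓝[<] 1) (𝓝 (Real.log (1 + 1))) :=
    ((continuousAt_const.add continuousAt_id).log (by norm_num)).tendsto.mono_left
      nhdsWithin_le_nhds
  have h := tendsto_const_nhds (x := (1 : ℝ)) |>.add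
    (hlog.div_atBot tendsto_log_one_sub_nhdsLT_one)
  rw [add_zero] at h
  refine h.congr' ?_
  filter_upwards [Ioo_mem_nhdsLT (zero_lt_one' ℝ)] with q hq
  have hneg : Real.log (1 - q) < 0 := Real.log_neg (by linarith [hq.2]) (by linarith [hq.1])
  rw [show 1 - q ^ 2 = (1 - q) * (1 + q) by ring,
    Real.log_mul (by linarith [hq.2]) (by linarith [hq.1]), add_div, div_self hneg.ne]

theorem tendsto_logDivSeries_sq_div_sq :
    Tendsto (fun q => logDivSeries (q ^ 2) / Real.log (1 - q) ^ 2) (𝓝[<] 1) (𝓝 (1 / 2)) := by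
  have h := (tendsto_logDivSeries_div_sq.comp tendsto_sq_nhdsLT_one).mul
    (tendsto_log_one_sub_sq_div_log_one_sub.pow 2)
  rw [one_pow, mul_one] at h
  refine h.congr' ?_
  filter_upwards [Ioo_mem_nhdsLT (zero_lt_one' ℝ)] with q hq
  have hq2 : Real.log (1 - q ^ 2) ≠ 0 :=
    (Real.log_neg (sub_pos.mpr (pow_lt_one₀ hq.1.le hq.2 two_ne_zero))
      (sub_lt_self 1 (pow_pos hq.1 2))).ne
  simp only [Function.comp_apply]
  field_simp

theorem tendsto_div_abs_log_one_sub_mul_pow (c : ℝ) (n : ℕ) :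
    Tendsto (fun q : ℝ => c / |Real.log (1 - q)| * q ^ n) (𝓝[<] 1) (𝓝 0) := by
  have hdiv := tendsto_const_nhds (x := c) |>.div_atTop
    (tendsto_abs_atBot_atTop.comp tendsto_log_one_sub_nhdsLT_one)
  have hpow : Tendsto (fun q : ℝ => q ^ n) (𝓝[<] 1) (𝓝 1) := by
    simpa using ((continuous_pow n).tendsto (1 : ℝ)).mono_left nhdsWithin_le_nhds
  simpa using hdiv.mul hpow

/-- With `ε = β/|log(1−q)|`, `β > 1`: the asymptotics
`∑_{n≥1} (log(1+n)/n) q^{2n} ∼ ½(log(1−q))²` as `q → 1⁻`; hence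
`‖u_{0,q}‖²_{-1/2,√log} = 2ε² ∑_{n≥1} (log(1+n)/n) q^{2n} → β²`, while each Fourier
coefficient `ε q^n → 0`; thus `u_{0,q} ⇀ 0` weakly but not in norm. -/
theorem stmt_18 (β : ℝ) (hβ : 1 < β) :
    Tendsto (fun q : ℝ =>
        (∑' n : ℕ, (Real.log (1 + ((n : ℝ) + 1)) / ((n : ℝ) + 1)) * q ^ (2 * (n + 1)))
          / (Real.log (1 - q)) ^ 2)
      (nhdsWithin 1 (Set.Ioo (0 : ℝ) 1)) (nhds (1 / 2)) ∧
    Tendsto (fun q : ℝ =>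
        2 * (β / |Real.log (1 - q)|) ^ 2 *
          ∑' n : ℕ, (Real.log (1 + ((n : ℝ) + 1)) / ((n : ℝ) + 1)) * q ^ (2 * (n + 1)))
      (nhdsWithin 1 (Set.Ioo (0 : ℝ) 1)) (nhds (β ^ 2)) ∧
    (∀ n : ℕ, Tendsto (fun q : ℝ => (β / |Real.log (1 - q)|) * q ^ (n + 1))
      (nhdsWithin 1 (Set.Ioo (0 : ℝ) 1)) (nhds 0)) ∧
    ¬ Tendsto (fun q : ℝ =>
        2 * (β / |Real.log (1 - q)|) ^ 2 *
          ∑' n : ℕ, (Real.log (1 + ((n : ℝ) + 1)) / ((n : ℝ) + 1)) * q ^ (2 * (n + 1)))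
      (nhdsWithin 1 (Set.Ioo (0 : ℝ) 1)) (nhds 0) := by
  have hF : nhdsWithin (1 : ℝ) (Set.Ioo 0 1) ≤ 𝓝[<] 1 :=
    nhdsWithin_mono _ Set.Ioo_subset_Iio_self
  have hseries : ∀ q : ℝ,
      ∑' n : ℕ, Real.log (1 + ((n : ℝ) + 1)) / ((n : ℝ) + 1) * q ^ (2 * (n + 1)) =
        logDivSeries (q ^ 2) := fun q =>
    tsum_congr fun n => by rw [pow_mul, add_comm 1, add_assoc, one_add_one_eq_two]
  simp only [hseries]
  have hasymp := tendsto_logDivSeries_sq_div_sq.mono_left hF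
  have hnorm : Tendsto (fun q : ℝ => 2 * (β / |Real.log (1 - q)|) ^ 2 * logDivSeries (q ^ 2))
      (nhdsWithin 1 (Set.Ioo 0 1)) (𝓝 (β ^ 2)) := by
    have h := hasymp.const_mul (2 * β ^ 2)
    rw [show 2 * β ^ 2 * (1 / 2) = β ^ 2 by ring] at h
    refine h.congr fun q => ?_
    rw [div_pow, sq_abs]
    ring
  refine ⟨hasymp, hnorm, fun n => (tendsto_div_abs_log_one_sub_mul_pow β (n + 1)).mono_left hF,
    fun hzero => ?_⟩
  have := right_nhdsWithin_Ioo_neBot (zero_lt_one' ℝ)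
  exact (pow_pos (zero_lt_one.trans hβ) 2).ne' (tendsto_nhds_unique hnorm hzero)
end

section
/- Let F₋(μ,q) := ∫₀^q ε q t^{ε+μ} (1−qt)^ε / ((q−t)^ε (1−qt)) dt with ε = β/|log(1−q)| and β > 0 fixed. Then for every fixed μ > 0, F₋(μ,q) → β as q → 1⁻; more precisely F₋(μ,q) ∼ −ε·log(1−q²) as q → 1⁻. -/
/-!
Put `ε = β / |log (1 - q)|`, so that `ε → 0` and `(1 - q)^(-ε) = e^β`. Since `1 - q t ≥ q - t`,
the integrand is at least `ε q t^(ε+μ) / (1 - q t)`; integrating over `[1 - 1/|log (1 - q)|, q]`,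
where `t^(ε+μ) → 1`, gives the lower bound `≈ -ε log (1 - q²) - ε log |log (1 - q)|`. For the
upper bound split at `2q - 1`: below it `1 - q t ≤ 3 (q - t)`, so the integrand is at most
`3^ε ε q / (1 - q t)`, whose integral is at most `3^ε (-ε log (1 - q²))`; on `[2q - 1, q]` only
the singular factor `(q - t)^(-ε)` matters, and it contributes at most `ε e^β / (1 - ε)`. Both
bounds tend to `β` because `-ε log (1 - q²) = β - ε log (1 + q)` and `ε log |log (1 - q)| → 0`.
-/

open Filter

/-- The integral `F₋(μ,q)` with `ε = β/|log(1−q)|`. -/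
noncomputable def Fminus (β μ q : ℝ) : ℝ :=
  ∫ t in (0 : ℝ)..q,
    (β / |Real.log (1 - q)|) * q * t ^ ((β / |Real.log (1 - q)|) + μ) *
        (1 - q * t) ^ (β / |Real.log (1 - q)|)
      / ((q - t) ^ (β / |Real.log (1 - q)|) * (1 - q * t))

open MeasureTheory Set Topology Real intervalIntegral

noncomputable def fminusIntegrand (q e m t : ℝ) : ℝ :=
  e * q * t ^ (e + m) * (1 - q * t) ^ e / ((q - t) ^ e * (1 - q * t))

lemma Fminus_eq_integral (β μ q : ℝ) :
    Fminus β μ q = ∫ t in 0..q, fminusIntegrand q (β / |log (1 - q)|) μ t :=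
  rfl

section
variable {q x y : ℝ}

lemma intervalIntegrable_inv_one_sub_mul (hq : 0 ≤ q) (hxy : x ≤ y) (hy : 0 < 1 - q * y) :
    IntervalIntegrable (fun t => (1 - q * t)⁻¹) volume x y := by
  refine intervalIntegrable_inv (fun t ht => ?_) (by fun_prop)
  rw [uIcc_of_le hxy] at ht
  nlinarith [mul_le_mul_of_nonneg_left ht.2 hq]

lemma integral_inv_one_sub_mul (hq : 0 < q) (hxy : x ≤ y) (hy : 0 < 1 - q * y) :
    ∫ t in x..y, (1 - q * t)⁻¹ = log ((1 - q * x) / (1 - q * y)) / q := by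
  have hx : 0 < 1 - q * x := by nlinarith
  rw [integral_comp_sub_mul (fun u => u⁻¹) hq.ne', integral_inv_of_pos hy hx, smul_eq_mul,
    inv_mul_eq_div]

end

lemma intervalIntegrable_sub_rpow_neg {c q e : ℝ} (he : e < 1) :
    IntervalIntegrable (fun t => (q - t) ^ (-e)) volume c q := by
  have := (intervalIntegrable_rpow' (a := 0) (b := q - c) (by linarith : -1 < -e)).comp_sub_left q
  simp only [sub_zero, sub_sub_cancel] at this
  exact this.symm

lemma integral_sub_rpow_neg {c q e : ℝ} (he : e < 1) :
    ∫ t in c..q, (q - t) ^ (-e) = (q - c) ^ (1 - e) / (1 - e) := by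
  rw [integral_comp_sub_left (fun u => u ^ (-e)), sub_self,
    integral_rpow (Or.inl (by linarith)), zero_rpow (by linarith), neg_add_eq_sub]
  ring

section
variable {q e m t : ℝ}

lemma fminusIntegrand_nonneg (hq : q ≤ 1) (he : 0 ≤ e) (ht₀ : 0 ≤ t) (htq : t ≤ q) :
    0 ≤ fminusIntegrand q e m t := by
  have hqt : 0 ≤ 1 - q * t := by nlinarith
  have hq₀ : 0 ≤ q := ht₀.trans htq
  have hsub : 0 ≤ q - t := by linarith
  have := rpow_nonneg hqt e
  have := rpow_nonneg hsub e
  have := rpow_nonneg ht₀ (e + m)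
  unfold fminusIntegrand
  positivity

lemma fminusIntegrand_le_rpow_neg (hq₁ : q < 1) (he : 0 < e) (hm : 0 ≤ m) (ht₀ : 0 ≤ t)
    (htq : t ≤ q) :
    fminusIntegrand q e m t ≤ e * q / (1 - q ^ 2) * (q - t) ^ (-e) := by
  rcases htq.eq_or_lt with rfl | htq
  · simp [fminusIntegrand, zero_rpow he.ne', zero_rpow (neg_ne_zero.2 he.ne')]
  have hq₀ : 0 < q := by linarith
  have hsub : 0 < q - t := by linarith
  have hqt : 0 < 1 - q * t := by nlinarith
  have hq2 : 0 < 1 - q ^ 2 := by nlinarith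
  have := rpow_pos_of_pos hsub e
  have := rpow_nonneg hqt.le e
  calc fminusIntegrand q e m t
      ≤ e * q * 1 * 1 / ((q - t) ^ e * (1 - q ^ 2)) := by
        unfold fminusIntegrand
        gcongr
        · exact rpow_le_one ht₀ (by linarith) (by linarith)
        · exact rpow_le_one hqt.le (by nlinarith) he.le
        · nlinarith
    _ = e * q / (1 - q ^ 2) * (q - t) ^ (-e) := by
        rw [rpow_neg hsub.le]
        field_simp

lemma fminusIntegrand_le_inv_one_sub_mul {C : ℝ} (hC₀ : 0 ≤ C) (he : 0 ≤ e) (hm : 0 ≤ m)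
    (ht₀ : 0 ≤ t) (htq : t < q) (hq₁ : q ≤ 1) (hC : 1 - q * t ≤ C * (q - t)) :
    fminusIntegrand q e m t ≤ C ^ e * e * q * (1 - q * t)⁻¹ := by
  have hq₀ : 0 ≤ q := by linarith
  have hsub : 0 < q - t := by linarith
  have hqt : 0 < 1 - q * t := by nlinarith
  have := rpow_pos_of_pos hsub e
  calc fminusIntegrand q e m t
      ≤ e * q * 1 * (C ^ e * (q - t) ^ e) / ((q - t) ^ e * (1 - q * t)) := by
        unfold fminusIntegrand
        gcongr
        · exact rpow_le_one ht₀ (by linarith) (by linarith)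
        · rw [← mul_rpow hC₀ hsub.le]
          gcongr
    _ = C ^ e * e * q * (1 - q * t)⁻¹ := by
        field_simp

lemma mul_inv_one_sub_mul_le_fminusIntegrand {a : ℝ} (ha : 0 ≤ a) (hat : a ≤ t) (htq : t < q)
    (hq₁ : q ≤ 1) (he : 0 ≤ e) (hm : 0 ≤ m) :
    e * q * a ^ (e + m) * (1 - q * t)⁻¹ ≤ fminusIntegrand q e m t := by
  have hsub : 0 < q - t := by linarith
  have hqt : 0 < 1 - q * t := by nlinarith
  have := rpow_pos_of_pos hsub e
  have := rpow_nonneg (ha.trans hat) (e + m)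
  calc e * q * a ^ (e + m) * (1 - q * t)⁻¹
      = e * q * a ^ (e + m) * (q - t) ^ e / ((q - t) ^ e * (1 - q * t)) := by
        field_simp
    _ ≤ fminusIntegrand q e m t := by
        unfold fminusIntegrand
        have : 0 ≤ q := by linarith
        gcongr
        nlinarith

lemma intervalIntegrable_fminusIntegrand (hq₀ : 0 ≤ q) (hq₁ : q < 1) (he₀ : 0 < e)
    (he₁ : e < 1) (hm : 0 ≤ m) : IntervalIntegrable (fminusIntegrand q e m) volume 0 q := by
  refine ((intervalIntegrable_sub_rpow_neg he₁).const_mul (e * q / (1 - q ^ 2))).mono_fun'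
    (Measurable.aestronglyMeasurable (by unfold fminusIntegrand; fun_prop)) ?_
  rw [uIoc_of_le hq₀]
  filter_upwards [ae_restrict_mem measurableSet_Ioc] with t ht
  rw [norm_of_nonneg (fminusIntegrand_nonneg hq₁.le he₀.le ht.1.le ht.2)]
  exact fminusIntegrand_le_rpow_neg hq₁ he₀ hm ht.1.le ht.2

lemma integral_fminusIntegrand_far_le {c : ℝ} (hc₀ : 0 ≤ c) (hcq : c ≤ 2 * q - 1)
    (hq₁ : q < 1) (he₀ : 0 < e) (he₁ : e < 1) (hm : 0 ≤ m) :
    ∫ t in 0..c, fminusIntegrand q e m t ≤ 3 ^ e * e * -log (1 - q * c) := by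
  have hq₀ : 0 < q := by linarith
  have hqc : 0 < 1 - q * c := by nlinarith
  have hf := (intervalIntegrable_fminusIntegrand hq₀.le hq₁ he₀ he₁ hm).mono_set
    (uIcc_subset_uIcc left_mem_uIcc (by rw [uIcc_of_le hq₀.le]; exact ⟨hc₀, by linarith⟩))
  have hg := (intervalIntegrable_inv_one_sub_mul hq₀.le hc₀ hqc).const_mul (3 ^ e * e * q)
  calc ∫ t in 0..c, fminusIntegrand q e m t
      ≤ ∫ t in 0..c, 3 ^ e * e * q * (1 - q * t)⁻¹ := by
        refine integral_mono_on_of_le_Ioo hc₀ hf hg fun t ht => ?_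
        -- `q - t ≥ 1 - q` on `[0, 2q - 1]`, whence `1 - q t = (1 - q) + q (1 - t) ≤ 3 (q - t)`
        exact fminusIntegrand_le_inv_one_sub_mul (by norm_num) he₀.le hm ht.1.le
          (by linarith [ht.2]) hq₁.le (by nlinarith [ht.1, ht.2])
    _ = 3 ^ e * e * -log (1 - q * c) := by
        rw [intervalIntegral.integral_const_mul, integral_inv_one_sub_mul hq₀ hc₀ hqc, mul_zero,
          sub_zero, one_div, log_inv]
        field_simp

lemma integral_fminusIntegrand_near_le {c : ℝ} (hc₀ : 0 ≤ c) (hcq : c ≤ q) (hq₁ : q < 1)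
    (he₀ : 0 < e) (he₁ : e < 1) (hm : 0 ≤ m) :
    ∫ t in c..q, fminusIntegrand q e m t ≤
      e * q / (1 - q ^ 2) * ((q - c) ^ (1 - e) / (1 - e)) := by
  have hq₀ : 0 ≤ q := hc₀.trans hcq
  have hf := (intervalIntegrable_fminusIntegrand hq₀ hq₁ he₀ he₁ hm).mono_set
    (uIcc_subset_uIcc (by rw [uIcc_of_le hq₀]; exact ⟨hc₀, hcq⟩) right_mem_uIcc)
  have hg := (intervalIntegrable_sub_rpow_neg (c := c) (q := q) he₁).const_mul (e * q / (1 - q ^ 2))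
  calc ∫ t in c..q, fminusIntegrand q e m t
      ≤ ∫ t in c..q, e * q / (1 - q ^ 2) * (q - t) ^ (-e) :=
        integral_mono_on hcq hf hg fun t ht =>
          fminusIntegrand_le_rpow_neg hq₁ he₀ hm (hc₀.trans ht.1) ht.2
    _ = e * q / (1 - q ^ 2) * ((q - c) ^ (1 - e) / (1 - e)) := by
        rw [intervalIntegral.integral_const_mul, integral_sub_rpow_neg he₁]

lemma integral_fminusIntegrand_le (hq : 1 / 2 ≤ q) (hq₁ : q < 1) (he₀ : 0 < e)
    (he₁ : e < 1) (hm : 0 ≤ m) :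
    ∫ t in 0..q, fminusIntegrand q e m t ≤
      3 ^ e * e * -log (1 - q ^ 2) + e * (1 - q) ^ (-e) / (1 - e) := by
  have hq₀ : 0 < q := by linarith
  have hint := intervalIntegrable_fminusIntegrand hq₀.le hq₁ he₀ he₁ hm
  have hc : 2 * q - 1 ∈ uIcc 0 q := by rw [uIcc_of_le hq₀.le]; constructor <;> linarith
  rw [← integral_add_adjacent_intervals (hint.mono_set (uIcc_subset_uIcc left_mem_uIcc hc))
    (hint.mono_set (uIcc_subset_uIcc hc right_mem_uIcc))]
  gcongr ?_ + ?_
  · refine (integral_fminusIntegrand_far_le (by linarith) le_rfl hq₁ he₀ he₁ hm).trans ?_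
    gcongr <;> nlinarith
  · have h1q : 0 < 1 - q := by linarith
    have hbound : 0 ≤ e * (1 - q) ^ (-e) / (1 - e) :=
      div_nonneg (mul_nonneg he₀.le (rpow_nonneg h1q.le _)) (by linarith)
    calc ∫ t in (2 * q - 1)..q, fminusIntegrand q e m t
        ≤ e * q / (1 - q ^ 2) * ((q - (2 * q - 1)) ^ (1 - e) / (1 - e)) :=
          integral_fminusIntegrand_near_le (by linarith) (by linarith) hq₁ he₀ he₁ hm
      _ = q / (1 + q) * (e * (1 - q) ^ (-e) / (1 - e)) := by
          rw [show q - (2 * q - 1) = 1 - q by ring, sub_eq_add_neg 1 e, rpow_add h1q, rpow_one]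
          have : 1 + -e ≠ 0 := by linarith
          rw [show 1 - q ^ 2 = (1 - q) * (1 + q) by ring]
          field_simp
      _ ≤ e * (1 - q) ^ (-e) / (1 - e) :=
          mul_le_of_le_one_left hbound ((div_le_one (by linarith)).2 (by linarith))

lemma le_integral_fminusIntegrand {a : ℝ} (ha : 0 ≤ a) (haq : a < q) (hq₁ : q < 1)
    (he₀ : 0 < e) (he₁ : e < 1) (hm : 0 ≤ m) :
    e * a ^ (e + m) * (log (1 - a) - log (1 - q ^ 2)) ≤
      ∫ t in 0..q, fminusIntegrand q e m t := by
  have hq : 0 < q := ha.trans_lt haq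
  have hq2 : 0 < 1 - q * q := by nlinarith
  have hint := intervalIntegrable_fminusIntegrand hq.le hq₁ he₀ he₁ hm
  have ha_mem : a ∈ uIcc 0 q := by rw [uIcc_of_le hq.le]; exact ⟨ha, haq.le⟩
  have hg := (intervalIntegrable_inv_one_sub_mul hq.le haq.le hq2).const_mul (e * q * a ^ (e + m))
  rw [← integral_add_adjacent_intervals (hint.mono_set (uIcc_subset_uIcc left_mem_uIcc ha_mem))
    (hint.mono_set (uIcc_subset_uIcc ha_mem right_mem_uIcc))]
  calc e * a ^ (e + m) * (log (1 - a) - log (1 - q ^ 2))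
      ≤ e * a ^ (e + m) * log ((1 - q * a) / (1 - q * q)) := by
        rw [log_div (by nlinarith) hq2.ne', ← sq]
        gcongr
        · linarith
        · nlinarith
    _ = ∫ t in a..q, e * q * a ^ (e + m) * (1 - q * t)⁻¹ := by
        rw [intervalIntegral.integral_const_mul, integral_inv_one_sub_mul hq haq.le hq2]
        field_simp
    _ ≤ ∫ t in a..q, fminusIntegrand q e m t :=
        integral_mono_on_of_le_Ioo haq.le hg
          (hint.mono_set (uIcc_subset_uIcc ha_mem right_mem_uIcc)) fun t ht =>
            mul_inv_one_sub_mul_le_fminusIntegrand ha ht.1.le ht.2 hq₁.le he₀.le hm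
    _ ≤ _ := le_add_of_nonneg_left (integral_nonneg ha fun t ht =>
        fminusIntegrand_nonneg hq₁.le he₀.le ht.1 (ht.2.trans haq.le))

end

section Asymptotics
variable (β : ℝ)

lemma tendsto_abs_log_one_sub : Tendsto (fun q : ℝ => |log (1 - q)|) (𝓝[<] 1) atTop := by
  have h : Tendsto (fun q : ℝ => 1 - q) (𝓝[<] 1) (𝓝[>] 0) := by
    refine tendsto_nhdsWithin_of_tendsto_nhds_of_eventually_within _ ?_ ?_
    · simpa using ((continuous_sub_left (1 : ℝ)).tendsto 1).mono_left nhdsWithin_le_nhds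
    · filter_upwards [self_mem_nhdsWithin] with q (hq : q < 1)
      exact sub_pos.2 hq
  exact tendsto_abs_atBot_atTop.comp (tendsto_log_nhdsGT_zero.comp h)

lemma tendsto_div_abs_log_one_sub : Tendsto (fun q => β / |log (1 - q)|) (𝓝[<] 1) (𝓝 0) :=
  tendsto_const_nhds.div_atTop tendsto_abs_log_one_sub

lemma abs_log_one_sub_eq {q : ℝ} (hq₀ : 0 < q) (hq₁ : q < 1) : |log (1 - q)| = -log (1 - q) :=
  abs_of_neg (log_neg (by linarith) (by linarith))

lemma one_sub_inv_abs_log_one_sub_lt {q : ℝ} (hq₀ : 0 < q) (hq₁ : q < 1) :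
    1 - |log (1 - q)|⁻¹ < q := by
  have hL : 0 < |log (1 - q)| := abs_pos.2 (log_neg (by linarith) (by linarith)).ne
  have h := abs_log_mul_self_lt (1 - q) (by linarith) (by linarith)
  rw [abs_mul, abs_of_pos (by linarith : 0 < 1 - q)] at h
  rw [sub_lt_comm, ← one_div, lt_div_iff₀ hL]
  linarith

lemma tendsto_neg_div_abs_log_one_sub_mul_log_one_sub_sq :
    Tendsto (fun q => -(β / |log (1 - q)|) * log (1 - q ^ 2)) (𝓝[<] 1) (𝓝 β) := by
  have hlog : Tendsto (fun q : ℝ => log (1 + q)) (𝓝[<] 1) (𝓝 (log 2)) := by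
    have := ((continuous_const_add (1 : ℝ)).tendsto 1).log (by norm_num)
    rw [one_add_one_eq_two] at this
    exact this.mono_left nhdsWithin_le_nhds
  have hlim := tendsto_const_nhds (x := β) |>.sub ((tendsto_div_abs_log_one_sub β).mul hlog)
  rw [zero_mul, sub_zero] at hlim
  refine hlim.congr' ?_
  filter_upwards [Ioo_mem_nhdsLT (zero_lt_one' ℝ)] with q ⟨hq₀, hq₁⟩
  have hL : log (1 - q) ≠ 0 := (log_neg (by linarith) (by linarith)).ne
  rw [show 1 - q ^ 2 = (1 - q) * (1 + q) by ring, log_mul (by linarith) (by linarith),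
    abs_log_one_sub_eq hq₀ hq₁]
  field_simp
  ring

lemma tendsto_Fminus_upper_bound :
    Tendsto (fun q => 3 ^ (β / |log (1 - q)|) * (β / |log (1 - q)|) * -log (1 - q ^ 2) +
      (β / |log (1 - q)|) * (1 - q) ^ (-(β / |log (1 - q)|)) / (1 - β / |log (1 - q)|))
      (𝓝[<] 1) (𝓝 β) := by
  have hε := tendsto_div_abs_log_one_sub β
  have h3 : Tendsto (fun q => (3 : ℝ) ^ (β / |log (1 - q)|)) (𝓝[<] 1) (𝓝 1) := by
    simpa using tendsto_const_nhds.rpow hε (Or.inl three_ne_zero)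
  have hmain := h3.mul (tendsto_neg_div_abs_log_one_sub_mul_log_one_sub_sq β)
  have hrem : Tendsto (fun q => (β / |log (1 - q)|) * exp β / (1 - β / |log (1 - q)|))
      (𝓝[<] 1) (𝓝 0) := by
    have := (hε.mul_const (exp β)).div (tendsto_const_nhds.sub hε)
      (by norm_num : (1 : ℝ) - 0 ≠ 0)
    rwa [zero_mul, zero_div] at this
  have := hmain.add hrem
  rw [one_mul, add_zero] at this
  refine this.congr' ?_
  filter_upwards [Ioo_mem_nhdsLT (zero_lt_one' ℝ)] with q ⟨hq₀, hq₁⟩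
  have hexp : (1 - q) ^ (-(β / |log (1 - q)|)) = exp β := by
    have hL : log (1 - q) ≠ 0 := (log_neg (by linarith) (by linarith)).ne
    rw [rpow_def_of_pos (by linarith), abs_log_one_sub_eq hq₀ hq₁]
    field_simp
  rw [hexp]
  ring

lemma tendsto_Fminus_lower_bound (μ : ℝ) :
    Tendsto (fun q => (β / |log (1 - q)|) * (1 - |log (1 - q)|⁻¹) ^ (β / |log (1 - q)| + μ) *
      (log (1 - (1 - |log (1 - q)|⁻¹)) - log (1 - q ^ 2))) (𝓝[<] 1) (𝓝 β) := by
  have hL := tendsto_abs_log_one_sub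
  have ha : Tendsto (fun q => (1 - |log (1 - q)|⁻¹) ^ (β / |log (1 - q)| + μ))
      (𝓝[<] 1) (𝓝 1) := by
    have h1 : Tendsto (fun q => 1 - |log (1 - q)|⁻¹) (𝓝[<] 1) (𝓝 1) := by
      simpa using tendsto_const_nhds.sub hL.inv_tendsto_atTop
    have h2 : Tendsto (fun q => β / |log (1 - q)| + μ) (𝓝[<] 1) (𝓝 μ) := by
      simpa using (tendsto_div_abs_log_one_sub β).add_const μ
    simpa using h1.rpow h2 (Or.inl one_ne_zero)
  have hlogL : Tendsto (fun q => log |log (1 - q)| / |log (1 - q)|) (𝓝[<] 1) (𝓝 0) :=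
    isLittleO_log_id_atTop.tendsto_div_nhds_zero.comp hL
  have := ha.mul ((tendsto_neg_div_abs_log_one_sub_mul_log_one_sub_sq β).sub (hlogL.const_mul β))
  rw [mul_zero, sub_zero, one_mul] at this
  refine this.congr fun q => ?_
  rw [sub_sub_cancel, log_inv]
  ring

end Asymptotics

lemma tendsto_Fminus {β μ : ℝ} (hβ : 0 < β) (hμ : 0 < μ) :
    Tendsto (Fminus β μ) (𝓝[<] 1) (𝓝 β) := by
  have hq : ∀ᶠ q : ℝ in 𝓝[<] 1, q ∈ Ioo (1 / 2) 1 := Ioo_mem_nhdsLT (by norm_num)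
  have hL : ∀ᶠ q in 𝓝[<] 1, 1 < |log (1 - q)| :=
    tendsto_abs_log_one_sub.eventually_gt_atTop 1
  have hε : ∀ᶠ q in 𝓝[<] 1, β / |log (1 - q)| < 1 :=
    (tendsto_div_abs_log_one_sub β).eventually (gt_mem_nhds one_pos)
  refine tendsto_of_tendsto_of_tendsto_of_le_of_le' (tendsto_Fminus_lower_bound β μ)
    (tendsto_Fminus_upper_bound β) ?_ ?_
  · filter_upwards [hq, hL, hε] with q ⟨hq₀, hq₁⟩ hL hε
    rw [Fminus_eq_integral]
    exact le_integral_fminusIntegrand (sub_nonneg.2 (inv_le_one_of_one_le₀ hL.le))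
      (one_sub_inv_abs_log_one_sub_lt (by linarith) hq₁) hq₁ (by positivity) hε hμ.le
  · filter_upwards [hq, hL, hε] with q ⟨hq₀, hq₁⟩ hL hε
    rw [Fminus_eq_integral]
    exact integral_fminusIntegrand_le hq₀.le hq₁ (by positivity) hε hμ.le

/-- For every fixed `μ > 0`, `F₋(μ,q) → β` as `q → 1⁻`; more precisely
`F₋(μ,q) ∼ −ε·log(1−q²)` as `q → 1⁻`. -/
theorem stmt_19 (β : ℝ) (hβ : 0 < β) (μ : ℝ) (hμ : 0 < μ) :
    Tendsto (fun q : ℝ => Fminus β μ q)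
      (nhdsWithin 1 (Set.Ioo (0 : ℝ) 1)) (nhds β) ∧
    Tendsto (fun q : ℝ =>
        Fminus β μ q / (-(β / |Real.log (1 - q)|) * Real.log (1 - q ^ 2)))
      (nhdsWithin 1 (Set.Ioo (0 : ℝ) 1)) (nhds 1) := by
  have hl : 𝓝[Ioo 0 1] (1 : ℝ) ≤ 𝓝[<] 1 := nhdsWithin_mono 1 Ioo_subset_Iio_self
  have hF := (tendsto_Fminus hβ hμ).mono_left hl
  have hden := (tendsto_neg_div_abs_log_one_sub_mul_log_one_sub_sq β).mono_left hl
  have hratio := hF.div hden hβ.ne'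
  rw [div_self hβ.ne'] at hratio
  exact ⟨hF, hratio⟩
end
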